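/- arXiv:2104.05135 — 13 statements merged into one kernel-verified Lean document; each statement's English description precedes it below -/
import Mathlib

section
/- For every conditional pmf p on N given U (with |N| = n, |U| = n²), there exists a decodable and private query kernel w on the subsets of N such that E[|Q|] ≤ Σ_{i=1}^{n} i·θ_i, where θ_1,…,θ_n are defined from p as in the context. (Achievability part of Theorem 1: the rate R = (Σ_{i=1}^{n} i·θ_i)^{-1} is achievable.) -/
open Finset


noncomputable section AchAux
open scoped Classical

variable {m n : ℕ}

def sfun (p : Fin m → Fin n → ℝ) (lamx : Fin n → ℕ → ℝ) (u : Fin m) (x : Fin n) (k : ℕ) : ℝ :=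
  min (p u x) (lamx x k) - min (p u x) (lamx x (k-1))

def thx (lamx : Fin n → ℕ → ℝ) (x : Fin n) (k : ℕ) : ℝ := lamx x k - lamx x (k-1)

def mkf (p : Fin m → Fin n → ℝ) (lamx : Fin n → ℕ → ℝ) (u : Fin m) (x : Fin n) (k : ℕ) : ℝ :=
  thx lamx x k - sfun p lamx u x k

section Lemmas

variable {p : Fin m → Fin n → ℝ} {lamx : Fin n → ℕ → ℝ}

theorem sum_Icc_sub (G : ℕ → ℝ) (M : ℕ) :
    ∑ k ∈ Icc 1 M, (G k - G (k-1)) = G M - G 0 := by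
  induction M with
  | zero => simp
  | succ M ih =>
      rw [Finset.sum_Icc_succ_top (by omega : 1 ≤ M + 1), ih]
      simp

theorem thx_nonneg (Hmono : ∀ x j k, j ≤ k → k ≤ n-1 → lamx x j ≤ lamx x k)
    (x : Fin n) {k : ℕ} (hk : k ≤ n-1) : 0 ≤ thx lamx x k := by
  exact sub_nonneg.mpr (Hmono x (k-1) k (by omega) hk)

theorem sfun_nonneg (Hmono : ∀ x j k, j ≤ k → k ≤ n-1 → lamx x j ≤ lamx x k)
    (u : Fin m) (x : Fin n) {k : ℕ} (hk : k ≤ n-1) : 0 ≤ sfun p lamx u x k := by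
  have h := min_le_min (le_refl (p u x)) (Hmono x (k-1) k (by omega) hk)
  exact sub_nonneg.mpr h

theorem sfun_le_thx (Hmono : ∀ x j k, j ≤ k → k ≤ n-1 → lamx x j ≤ lamx x k)
    (u : Fin m) (x : Fin n) {k : ℕ} (hk : k ≤ n-1) : sfun p lamx u x k ≤ thx lamx x k := by
  have hl := Hmono x (k-1) k (by omega) hk
  rcases le_total (p u x) (lamx x (k-1)) with h | h
  · have h1 : min (p u x) (lamx x (k-1)) = p u x := min_eq_left h
    have h2 : min (p u x) (lamx x k) = p u x := min_eq_left (le_trans h hl)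
    unfold sfun thx; rw [h1, h2]; linarith [Hmono x (k-1) k (by omega) hk, h]
  · have h1 : min (p u x) (lamx x (k-1)) = lamx x (k-1) := min_eq_right h
    have h2 : min (p u x) (lamx x k) ≤ lamx x k := min_le_right _ _
    unfold sfun thx; rw [h1]; linarith

theorem mkf_nonneg (Hmono : ∀ x j k, j ≤ k → k ≤ n-1 → lamx x j ≤ lamx x k)
    (u : Fin m) (x : Fin n) {k : ℕ} (hk : k ≤ n-1) : 0 ≤ mkf p lamx u x k := by
  exact sub_nonneg.mpr (sfun_le_thx (p := p) Hmono u x hk)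

theorem sfun_eq_thx_of_good (Hmono : ∀ x j k, j ≤ k → k ≤ n-1 → lamx x j ≤ lamx x k)
    (u : Fin m) (x : Fin n) {k : ℕ} (hk : k ≤ n-1) (hg : ¬ p u x < lamx x k) :
    sfun p lamx u x k = thx lamx x k := by
  push_neg at hg
  have hl := Hmono x (k-1) k (by omega) hk
  have h1 : min (p u x) (lamx x k) = lamx x k := min_eq_right hg
  have h2 : min (p u x) (lamx x (k-1)) = lamx x (k-1) := min_eq_right (le_trans hl hg)
  unfold sfun thx; rw [h1, h2]

theorem mkf_eq_zero_of_good (Hmono : ∀ x j k, j ≤ k → k ≤ n-1 → lamx x j ≤ lamx x k)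
    (u : Fin m) (x : Fin n) {k : ℕ} (hk : k ≤ n-1) (hg : ¬ p u x < lamx x k) :
    mkf p lamx u x k = 0 := by
  simp [mkf, sfun_eq_thx_of_good (p := p) Hmono u x hk hg]

theorem sum_sfun (hp0 : ∀ u x, 0 ≤ p u x) (H0 : ∀ x, lamx x 0 = 0)
    (u : Fin m) (x : Fin n) :
    ∑ k ∈ Icc 1 (n-1), sfun p lamx u x k = min (p u x) (lamx x (n-1)) := by
  have := sum_Icc_sub (fun k => min (p u x) (lamx x k)) (n-1)
  simp only [sfun]
  rw [this, H0, min_eq_right (hp0 u x), sub_zero]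

theorem sum_thx (H0 : ∀ x, lamx x 0 = 0) (x : Fin n) :
    ∑ k ∈ Icc 1 (n-1), thx lamx x k = lamx x (n-1) := by
  have := sum_Icc_sub (fun k => lamx x k) (n-1)
  simp only [thx]
  rw [this, H0, sub_zero]

theorem sum_mkf (hp0 : ∀ u x, 0 ≤ p u x) (H0 : ∀ x, lamx x 0 = 0)
    (u : Fin m) (x : Fin n) :
    ∑ k ∈ Icc 1 (n-1), mkf p lamx u x k = lamx x (n-1) - min (p u x) (lamx x (n-1)) := by
  simp only [mkf, Finset.sum_sub_distrib]
  rw [sum_thx H0, sum_sfun hp0 H0]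

end Lemmas

section Lemmas2

variable {p : Fin m → Fin n → ℝ} {lamx : Fin n → ℕ → ℝ}

def ffun (p : Fin m → Fin n → ℝ) (lamx : Fin n → ℕ → ℝ) (u : Fin m) (y : Fin n) : ℝ :=
  p u y - min (p u y) (lamx y (n-1))

def Ftot (p : Fin m → Fin n → ℝ) (lamx : Fin n → ℕ → ℝ) (u : Fin m) : ℝ := ∑ y, ffun p lamx u y

def Mtot (p : Fin m → Fin n → ℝ) (lamx : Fin n → ℕ → ℝ) (u : Fin m) : ℝ :=
  ∑ x, ∑ k ∈ Icc 1 (n-1), mkf p lamx u x k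

def gfun (p : Fin m → Fin n → ℝ) (lamx : Fin n → ℕ → ℝ) (u : Fin m) (y : Fin n) : ℝ :=
  if Ftot p lamx u = 0 then 0 else ffun p lamx u y / Ftot p lamx u

theorem ffun_nonneg (u : Fin m) (y : Fin n) : 0 ≤ ffun p lamx u y :=
  sub_nonneg.mpr (min_le_left _ _)

theorem Ftot_nonneg (u : Fin m) : 0 ≤ Ftot p lamx u :=
  Finset.sum_nonneg fun y _ => ffun_nonneg u y

theorem Mtot_nonneg (Hmono : ∀ x j k, j ≤ k → k ≤ n-1 → lamx x j ≤ lamx x k)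
    (u : Fin m) : 0 ≤ Mtot p lamx u :=
  Finset.sum_nonneg fun x _ => Finset.sum_nonneg fun k hk =>
    mkf_nonneg Hmono u x (Finset.mem_Icc.mp hk).2

theorem FsubM (hp0 : ∀ u x, 0 ≤ p u x) (hp1 : ∀ u, ∑ x, p u x = 1)
    (H0 : ∀ x, lamx x 0 = 0) (u : Fin m) :
    Ftot p lamx u - Mtot p lamx u = 1 - ∑ x, lamx x (n-1) := by
  unfold Ftot Mtot
  rw [← Finset.sum_sub_distrib]
  have : ∀ x ∈ (univ : Finset (Fin n)),
      ffun p lamx u x - ∑ k ∈ Icc 1 (n-1), mkf p lamx u x k = p u x - lamx x (n-1) := by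
    intro x _
    rw [sum_mkf hp0 H0]
    unfold ffun; ring
  rw [Finset.sum_congr rfl this, Finset.sum_sub_distrib, hp1 u]

theorem Mtot_le_Ftot (hp0 : ∀ u x, 0 ≤ p u x) (hp1 : ∀ u, ∑ x, p u x = 1)
    (H0 : ∀ x, lamx x 0 = 0) (Hlam1 : (∑ x, lamx x (n-1)) ≤ 1) (u : Fin m) :
    Mtot p lamx u ≤ Ftot p lamx u := by
  have := FsubM hp0 hp1 H0 (lamx := lamx) u
  linarith

theorem mkf_le_Mtot (Hmono : ∀ x j k, j ≤ k → k ≤ n-1 → lamx x j ≤ lamx x k)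
    (u : Fin m) (x : Fin n) {k : ℕ} (hk1 : 1 ≤ k) (hk : k ≤ n-1) :
    mkf p lamx u x k ≤ Mtot p lamx u := by
  have h1 : mkf p lamx u x k ≤ ∑ k' ∈ Icc 1 (n-1), mkf p lamx u x k' :=
    Finset.single_le_sum (f := fun k' => mkf p lamx u x k')
      (fun k' hk' => mkf_nonneg Hmono u x (Finset.mem_Icc.mp hk').2)
      (Finset.mem_Icc.mpr ⟨hk1, hk⟩)
  have h2 : ∑ k' ∈ Icc 1 (n-1), mkf p lamx u x k' ≤ Mtot p lamx u :=
    Finset.single_le_sum (f := fun x => ∑ k' ∈ Icc 1 (n-1), mkf p lamx u x k')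
      (fun x' _ => Finset.sum_nonneg fun k' hk' => mkf_nonneg Hmono u x' (Finset.mem_Icc.mp hk').2)
      (Finset.mem_univ x)
  linarith

theorem mkf_eq_zero_of_F0 (hp0 : ∀ u x, 0 ≤ p u x) (hp1 : ∀ u, ∑ x, p u x = 1)
    (H0 : ∀ x, lamx x 0 = 0) (Hmono : ∀ x j k, j ≤ k → k ≤ n-1 → lamx x j ≤ lamx x k)
    (Hlam1 : (∑ x, lamx x (n-1)) ≤ 1)
    (u : Fin m) (x : Fin n) {k : ℕ} (hk1 : 1 ≤ k) (hk : k ≤ n-1)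
    (hF : Ftot p lamx u = 0) : mkf p lamx u x k = 0 := by
  have h1 := mkf_le_Mtot (p := p) Hmono u x hk1 hk
  have h2 := Mtot_le_Ftot hp0 hp1 H0 Hlam1 u
  have h3 := mkf_nonneg (p := p) Hmono u x hk
  linarith

theorem gfun_nonneg (u : Fin m) (y : Fin n) : 0 ≤ gfun p lamx u y := by
  unfold gfun
  split
  · exact le_refl 0
  · exact div_nonneg (ffun_nonneg u y) (Ftot_nonneg u)

theorem sum_gfun (u : Fin m) :
    ∑ y, gfun p lamx u y = if Ftot p lamx u = 0 then 0 else 1 := by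
  unfold gfun
  split
  · simp
  · rw [← Finset.sum_div]
    exact div_self (by assumption)

end Lemmas2


section Lemmas3

variable {p : Fin m → Fin n → ℝ} {lamx : Fin n → ℕ → ℝ}

def rho (p : Fin m → Fin n → ℝ) (lamx : Fin n → ℕ → ℝ) (x : Fin n) (k : ℕ) (u : Fin m) (y : Fin n) : ℝ :=
  if thx lamx x k = 0 then (if y = x then 1 else 0)
  else if p u x < lamx x k then
    (sfun p lamx u x k * (if y = x then 1 else 0) + mkf p lamx u x k * gfun p lamx u y) / thx lamx x k
  else (if y = x then 1 else 0)

theorem rho_nonneg (Hmono : ∀ x j k, j ≤ k → k ≤ n-1 → lamx x j ≤ lamx x k)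
    (x : Fin n) {k : ℕ} (hk : k ≤ n-1) (u : Fin m) (y : Fin n) :
    0 ≤ rho p lamx x k u y := by
  unfold rho
  split
  · positivity
  split
  · apply div_nonneg
    · have h1 := sfun_nonneg (p := p) Hmono u x hk
      have h2 := mkf_nonneg (p := p) Hmono u x hk
      have h3 := gfun_nonneg (p := p) (lamx := lamx) u y
      positivity
    · exact thx_nonneg Hmono x hk
  · positivity

theorem sum_rho (hp0 : ∀ u x, 0 ≤ p u x) (hp1 : ∀ u, ∑ x, p u x = 1)
    (H0 : ∀ x, lamx x 0 = 0) (Hmono : ∀ x j k, j ≤ k → k ≤ n-1 → lamx x j ≤ lamx x k)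
    (Hlam1 : (∑ x, lamx x (n-1)) ≤ 1)
    (x : Fin n) {k : ℕ} (hk1 : 1 ≤ k) (hk : k ≤ n-1) (u : Fin m) :
    ∑ y, rho p lamx x k u y = 1 := by
  unfold rho
  split
  · simp
  rename_i hθ
  split
  · rename_i hbad
    rw [← Finset.sum_div]
    rw [Finset.sum_add_distrib, ← Finset.mul_sum, ← Finset.mul_sum]
    rw [Finset.sum_ite_eq' univ x (fun _ => (1:ℝ))]
    simp only [Finset.mem_univ, if_true]
    rw [sum_gfun]
    by_cases hF : Ftot p lamx u = 0
    · rw [if_pos hF, mkf_eq_zero_of_F0 hp0 hp1 H0 Hmono Hlam1 u x hk1 hk hF]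
      have hs : sfun p lamx u x k = thx lamx x k := by
        have := mkf_eq_zero_of_F0 hp0 hp1 H0 Hmono Hlam1 u x hk1 hk hF
        unfold mkf at this; linarith
      rw [hs]; simp [div_self hθ]
    · rw [if_neg hF]
      have : sfun p lamx u x k * 1 + mkf p lamx u x k * 1 = thx lamx x k := by
        unfold mkf; ring_nf
      rw [this, div_self hθ]
  · simp

theorem thx_mul_rho (hp0 : ∀ u x, 0 ≤ p u x) (hp1 : ∀ u, ∑ x, p u x = 1)
    (H0 : ∀ x, lamx x 0 = 0) (Hmono : ∀ x j k, j ≤ k → k ≤ n-1 → lamx x j ≤ lamx x k)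
    (x : Fin n) {k : ℕ} (hk : k ≤ n-1) (u : Fin m) (y : Fin n) :
    thx lamx x k * rho p lamx x k u y
      = sfun p lamx u x k * (if y = x then 1 else 0) + mkf p lamx u x k * gfun p lamx u y := by
  unfold rho
  split
  · rename_i hθ
    have hs0 : sfun p lamx u x k = 0 := by
      have h1 := sfun_nonneg (p := p) Hmono u x hk
      have h2 := sfun_le_thx (p := p) Hmono u x hk
      linarith [le_of_eq hθ]
    have hm0 : mkf p lamx u x k = 0 := by unfold mkf; rw [hs0, hθ]; ring
    rw [hθ, hs0, hm0]; ring
  split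
  · rename_i hθ hbad
    rw [mul_div_cancel₀ _ hθ]
  · rename_i hθ hgood
    rw [mkf_eq_zero_of_good (p := p) Hmono u x hk hgood,
        sfun_eq_thx_of_good (p := p) Hmono u x hk hgood]
    ring

end Lemmas3


section Lemmas4

variable {p : Fin m → Fin n → ℝ} {lamx : Fin n → ℕ → ℝ}

def Qset (x : Fin n) (c : Fin m → Fin n) : Finset (Fin n) := insert x (Finset.image c univ)

theorem sum_prod_rho (hp0 : ∀ u x, 0 ≤ p u x) (hp1 : ∀ u, ∑ x, p u x = 1)
    (H0 : ∀ x, lamx x 0 = 0) (Hmono : ∀ x j k, j ≤ k → k ≤ n-1 → lamx x j ≤ lamx x k)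
    (Hlam1 : (∑ x, lamx x (n-1)) ≤ 1)
    (x : Fin n) {k : ℕ} (hk1 : 1 ≤ k) (hk : k ≤ n-1) :
    ∑ c : Fin m → Fin n, ∏ u, rho p lamx x k u (c u) = 1 := by
  have h := Finset.prod_univ_sum (κ := fun _ : Fin m => Fin n)
    (t := fun _ => (univ : Finset (Fin n))) (f := fun u y => rho p lamx x k u y)
  rw [Fintype.piFinset_univ] at h
  rw [← h]
  rw [Finset.prod_congr rfl (fun u _ => sum_rho hp0 hp1 H0 Hmono Hlam1 x hk1 hk u)]
  simp

theorem sum_prod_rho_fix (hp0 : ∀ u x, 0 ≤ p u x) (hp1 : ∀ u, ∑ x, p u x = 1)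
    (H0 : ∀ x, lamx x 0 = 0) (Hmono : ∀ x j k, j ≤ k → k ≤ n-1 → lamx x j ≤ lamx x k)
    (Hlam1 : (∑ x, lamx x (n-1)) ≤ 1)
    (x : Fin n) {k : ℕ} (hk1 : 1 ≤ k) (hk : k ≤ n-1) (u₀ : Fin m) (x' : Fin n) :
    ∑ c : Fin m → Fin n, (if c u₀ = x' then ∏ u, rho p lamx x k u (c u) else 0)
      = rho p lamx x k u₀ x' := by
  set ρ' : Fin m → Fin n → ℝ := fun u y =>
    if u = u₀ then (if y = x' then rho p lamx x k u y else 0) else rho p lamx x k u y with hρ'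
  have h := Finset.prod_univ_sum (κ := fun _ : Fin m => Fin n)
    (t := fun _ => (univ : Finset (Fin n))) (f := ρ')
  rw [Fintype.piFinset_univ] at h
  have hL : ∏ u, ∑ y ∈ univ, ρ' u y = rho p lamx x k u₀ x' := by
    have : ∀ u ∈ (univ : Finset (Fin m)), ∑ y ∈ univ, ρ' u y
        = if u = u₀ then rho p lamx x k u₀ x' else 1 := by
      intro u _
      by_cases hu : u = u₀
      · subst hu
        simp only [hρ', if_pos rfl]
        rw [Finset.sum_ite_eq' univ x' (fun y => rho p lamx x k u y)]
        simp
      · simp only [hρ', if_neg hu]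
        exact sum_rho hp0 hp1 H0 Hmono Hlam1 x hk1 hk u
    rw [Finset.prod_congr rfl this, Finset.prod_ite_eq' univ u₀ (fun _ => rho p lamx x k u₀ x')]
    simp
  have hR : ∀ c : Fin m → Fin n, ∏ u, ρ' u (c u)
      = if c u₀ = x' then ∏ u, rho p lamx x k u (c u) else 0 := by
    intro c
    by_cases hc : c u₀ = x'
    · rw [if_pos hc]
      apply Finset.prod_congr rfl
      intro u _
      by_cases hu : u = u₀
      · subst hu; simp [hρ', hc]
      · simp only [hρ', if_neg hu]
    · rw [if_neg hc]
      apply Finset.prod_eq_zero (Finset.mem_univ u₀)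
      simp only [hρ', if_pos rfl, if_neg hc]
  rw [← Finset.sum_congr rfl (fun c _ => hR c), ← h, hL]

theorem card_Qset_le
    (Hmono : ∀ x j k, j ≤ k → k ≤ n-1 → lamx x j ≤ lamx x k)
    (HB : ∀ x k, 1 ≤ k → k ≤ n-1 → (univ.filter fun u => p u x < lamx x k).card ≤ k - 1)
    (x : Fin n) {k : ℕ} (hk1 : 1 ≤ k) (hk : k ≤ n-1) (c : Fin m → Fin n)
    (hne : ∏ u, rho p lamx x k u (c u) ≠ 0) :
    (Qset x c).card ≤ k := by
  have hfac : ∀ u, rho p lamx x k u (c u) ≠ 0 := by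
    intro u
    intro h0
    exact hne (Finset.prod_eq_zero (Finset.mem_univ u) h0)
  by_cases hθ : thx lamx x k = 0
  · have hcx : ∀ u, c u = x := by
      intro u
      have := hfac u
      unfold rho at this
      rw [if_pos hθ] at this
      by_contra hcu
      rw [if_neg hcu] at this
      exact this rfl
    have : Qset x c ⊆ {x} := by
      intro y hy
      unfold Qset at hy
      rcases Finset.mem_insert.mp hy with h | h
      · simp [h]
      · obtain ⟨u, _, hu⟩ := Finset.mem_image.mp h
        simp [← hu, hcx u]
    calc (Qset x c).card ≤ ({x} : Finset (Fin n)).card := Finset.card_le_card this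
    _ = 1 := Finset.card_singleton x
    _ ≤ k := hk1
  · have hgood : ∀ u, ¬ (p u x < lamx x k) → c u = x := by
      intro u hg
      have := hfac u
      unfold rho at this
      rw [if_neg hθ, if_neg hg] at this
      by_contra hcu
      rw [if_neg hcu] at this
      exact this rfl
    have hsub : Qset x c ⊆ insert x (Finset.image c (univ.filter fun u => p u x < lamx x k)) := by
      intro y hy
      unfold Qset at hy
      rcases Finset.mem_insert.mp hy with h | h
      · simp [h]
      · obtain ⟨u, _, hu⟩ := Finset.mem_image.mp h
        by_cases hb : p u x < lamx x k
        · exact Finset.mem_insert.mpr (Or.inr (Finset.mem_image.mpr ⟨u, Finset.mem_filter.mpr ⟨Finset.mem_univ u, hb⟩, hu⟩))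
        · rw [← hu, hgood u hb]; exact Finset.mem_insert_self x _
    calc (Qset x c).card ≤ _ := Finset.card_le_card hsub
    _ ≤ (Finset.image c (univ.filter fun u => p u x < lamx x k)).card + 1 :=
        Finset.card_insert_le _ _
    _ ≤ (univ.filter fun u => p u x < lamx x k).card + 1 :=
        Nat.add_le_add_right (Finset.card_image_le) 1
    _ ≤ (k - 1) + 1 := Nat.add_le_add_right (HB x k hk1 hk) 1
    _ = k := by omega

end Lemmas4


section Lemmas5

variable {p : Fin m → Fin n → ℝ} {lamx : Fin n → ℕ → ℝ}

def remw (p : Fin m → Fin n → ℝ) (lamx : Fin n → ℕ → ℝ) (u : Fin m) (y : Fin n) : ℝ :=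
  ffun p lamx u y - Mtot p lamx u * gfun p lamx u y

def Wfun (p : Fin m → Fin n → ℝ) (lamx : Fin n → ℕ → ℝ) (x' : Fin n) (u₀ : Fin m)
    (q : Finset (Fin n)) : ℝ :=
  (∑ x, ∑ k ∈ Icc 1 (n-1), thx lamx x k *
    ∑ c : Fin m → Fin n, if c u₀ = x' ∧ Qset x c = q then ∏ u, rho p lamx x k u (c u) else 0)
  + (if q = univ then remw p lamx u₀ x' else 0)

def PrQf (p : Fin m → Fin n → ℝ) (lamx : Fin n → ℕ → ℝ) (q : Finset (Fin n)) : ℝ :=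
  (∑ x, ∑ k ∈ Icc 1 (n-1), thx lamx x k *
    ∑ c : Fin m → Fin n, if Qset x c = q then ∏ u, rho p lamx x k u (c u) else 0)
  + (if q = univ then 1 - (∑ x, lamx x (n-1)) else 0)

def wker (p : Fin m → Fin n → ℝ) (lamx : Fin n → ℕ → ℝ) (x' : Fin n) (u₀ : Fin m)
    (q : Finset (Fin n)) : ℝ :=
  if p u₀ x' = 0 then (if q = univ then 1 else 0) else Wfun p lamx x' u₀ q / p u₀ x'

theorem remw_nonneg (hp0 : ∀ u x, 0 ≤ p u x) (hp1 : ∀ u, ∑ x, p u x = 1)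
    (H0 : ∀ x, lamx x 0 = 0) (Hmono : ∀ x j k, j ≤ k → k ≤ n-1 → lamx x j ≤ lamx x k)
    (Hlam1 : (∑ x, lamx x (n-1)) ≤ 1) (u : Fin m) (y : Fin n) :
    0 ≤ remw p lamx u y := by
  unfold remw gfun
  split
  · simp [ffun_nonneg (p := p) (lamx := lamx) u y]
  · rename_i hF
    have hM := Mtot_le_Ftot hp0 hp1 H0 Hlam1 (lamx := lamx) u
    have hf := ffun_nonneg (p := p) (lamx := lamx) u y
    have hF' := Ftot_nonneg (p := p) (lamx := lamx) u
    have h1 : Mtot p lamx u * (ffun p lamx u y / Ftot p lamx u)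
        ≤ Ftot p lamx u * (ffun p lamx u y / Ftot p lamx u) :=
      mul_le_mul_of_nonneg_right hM (div_nonneg hf hF')
    have h2 : Ftot p lamx u * (ffun p lamx u y / Ftot p lamx u) = ffun p lamx u y := by
      field_simp
    linarith

theorem sum_remw (hp0 : ∀ u x, 0 ≤ p u x) (hp1 : ∀ u, ∑ x, p u x = 1)
    (H0 : ∀ x, lamx x 0 = 0) (Hmono : ∀ x j k, j ≤ k → k ≤ n-1 → lamx x j ≤ lamx x k)
    (Hlam1 : (∑ x, lamx x (n-1)) ≤ 1) (u : Fin m) :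
    ∑ y, remw p lamx u y = 1 - ∑ x, lamx x (n-1) := by
  unfold remw
  rw [Finset.sum_sub_distrib, ← Finset.mul_sum, sum_gfun]
  have hFM := FsubM hp0 hp1 H0 (lamx := lamx) u
  by_cases hF : Ftot p lamx u = 0
  · rw [if_pos hF]
    have hM0 : Mtot p lamx u = 0 := by
      have := Mtot_le_Ftot hp0 hp1 H0 Hlam1 (lamx := lamx) u
      have := Mtot_nonneg (p := p) Hmono u
      linarith
    rw [show (∑ y, ffun p lamx u y) = Ftot p lamx u from rfl, hF, hM0]
    linarith
  · rw [if_neg hF]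
    have : (∑ y, ffun p lamx u y) = Ftot p lamx u := rfl
    rw [this]
    linarith

theorem W_nonneg (hp0 : ∀ u x, 0 ≤ p u x) (hp1 : ∀ u, ∑ x, p u x = 1)
    (H0 : ∀ x, lamx x 0 = 0) (Hmono : ∀ x j k, j ≤ k → k ≤ n-1 → lamx x j ≤ lamx x k)
    (Hlam1 : (∑ x, lamx x (n-1)) ≤ 1) (x' : Fin n) (u₀ : Fin m) (q : Finset (Fin n)) :
    0 ≤ Wfun p lamx x' u₀ q := by
  unfold Wfun
  apply add_nonneg
  · apply Finset.sum_nonneg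
    intro x _
    apply Finset.sum_nonneg
    intro k hk
    have hk2 := (Finset.mem_Icc.mp hk).2
    apply mul_nonneg (thx_nonneg Hmono x hk2)
    apply Finset.sum_nonneg
    intro c _
    split
    · exact Finset.prod_nonneg fun u _ => rho_nonneg Hmono x hk2 u (c u)
    · exact le_refl 0
  · split
    · exact remw_nonneg hp0 hp1 H0 Hmono Hlam1 u₀ x'
    · exact le_refl 0

theorem W_rowsum (hp0 : ∀ u x, 0 ≤ p u x) (hp1 : ∀ u, ∑ x, p u x = 1)
    (H0 : ∀ x, lamx x 0 = 0) (Hmono : ∀ x j k, j ≤ k → k ≤ n-1 → lamx x j ≤ lamx x k)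
    (Hlam1 : (∑ x, lamx x (n-1)) ≤ 1) (x' : Fin n) (u₀ : Fin m) :
    ∑ q : Finset (Fin n), Wfun p lamx x' u₀ q = p u₀ x' := by
  unfold Wfun
  rw [Finset.sum_add_distrib]
  have h2 : ∑ q : Finset (Fin n), (if q = univ then remw p lamx u₀ x' else 0)
      = remw p lamx u₀ x' := by
    rw [Finset.sum_ite_eq' Finset.univ (univ : Finset (Fin n)) (fun _ => remw p lamx u₀ x')]
    simp
  rw [h2, Finset.sum_comm]
  have key : ∀ x : Fin n,
      ∑ q : Finset (Fin n), ∑ k ∈ Icc 1 (n-1), (thx lamx x k *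
        ∑ c : Fin m → Fin n, if c u₀ = x' ∧ Qset x c = q then ∏ u, rho p lamx x k u (c u) else 0)
      = ∑ k ∈ Icc 1 (n-1), (sfun p lamx u₀ x k * (if x' = x then 1 else 0)
          + mkf p lamx u₀ x k * gfun p lamx u₀ x') := by
    intro x
    rw [Finset.sum_comm]
    apply Finset.sum_congr rfl
    intro k hk
    obtain ⟨hk1, hk2⟩ := Finset.mem_Icc.mp hk
    rw [← Finset.mul_sum, Finset.sum_comm]
    have hc : ∀ c ∈ (univ : Finset (Fin m → Fin n)),
        (∑ q : Finset (Fin n), if c u₀ = x' ∧ Qset x c = q then ∏ u, rho p lamx x k u (c u) else 0)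
        = if c u₀ = x' then ∏ u, rho p lamx x k u (c u) else 0 := by
      intro c _
      by_cases hcu : c u₀ = x'
      · simp only [hcu, true_and]
        rw [Finset.sum_ite_eq Finset.univ (Qset x c) (fun _ => ∏ u, rho p lamx x k u (c u))]
        simp
      · simp [hcu]
    rw [Finset.sum_congr rfl hc, sum_prod_rho_fix hp0 hp1 H0 Hmono Hlam1 x hk1 hk2 u₀ x',
        thx_mul_rho hp0 hp1 H0 Hmono x hk2 u₀ x']
  rw [Finset.sum_congr rfl (fun x _ => key x)]
  have expand : ∑ x : Fin n, ∑ k ∈ Icc 1 (n-1), (sfun p lamx u₀ x k * (if x' = x then 1 else 0)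
      + mkf p lamx u₀ x k * gfun p lamx u₀ x')
      = min (p u₀ x') (lamx x' (n-1)) + Mtot p lamx u₀ * gfun p lamx u₀ x' := by
    simp only [Finset.sum_add_distrib]
    congr 1
    · have : ∀ x : Fin n, ∑ k ∈ Icc 1 (n-1), sfun p lamx u₀ x k * (if x' = x then 1 else 0)
          = if x' = x then min (p u₀ x) (lamx x (n-1)) else 0 := by
        intro x
        rw [← Finset.sum_mul, sum_sfun hp0 H0]
        by_cases hx : x' = x <;> simp [hx]
      rw [Finset.sum_congr rfl (fun x _ => this x)]
      rw [Finset.sum_ite_eq Finset.univ x' (fun x => min (p u₀ x) (lamx x (n-1)))]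
      simp
    · unfold Mtot
      rw [Finset.sum_mul]
      apply Finset.sum_congr rfl
      intro x _
      rw [Finset.sum_mul]
  rw [expand]
  unfold remw ffun
  ring

theorem W_marg (hp0 : ∀ u x, 0 ≤ p u x) (hp1 : ∀ u, ∑ x, p u x = 1)
    (H0 : ∀ x, lamx x 0 = 0) (Hmono : ∀ x j k, j ≤ k → k ≤ n-1 → lamx x j ≤ lamx x k)
    (Hlam1 : (∑ x, lamx x (n-1)) ≤ 1) (u₀ : Fin m) (q : Finset (Fin n)) :
    ∑ x' : Fin n, Wfun p lamx x' u₀ q = PrQf p lamx q := by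
  unfold Wfun PrQf
  rw [Finset.sum_add_distrib]
  congr 1
  · rw [Finset.sum_comm]
    apply Finset.sum_congr rfl
    intro x _
    rw [Finset.sum_comm]
    apply Finset.sum_congr rfl
    intro k hk
    rw [← Finset.mul_sum]
    congr 1
    rw [Finset.sum_comm]
    apply Finset.sum_congr rfl
    intro c _
    by_cases hq : Qset x c = q
    · simp only [hq, and_true]
      rw [Finset.sum_ite_eq Finset.univ (c u₀) (fun _ => ∏ u, rho p lamx x k u (c u))]
      simp
    · simp [hq]
  · by_cases hq : q = univ
    · simp only [hq, if_pos rfl]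
      exact sum_remw hp0 hp1 H0 Hmono Hlam1 u₀
    · simp [hq]

theorem W_zero (hp0 : ∀ u x, 0 ≤ p u x) (hp1 : ∀ u, ∑ x, p u x = 1)
    (H0 : ∀ x, lamx x 0 = 0) (Hnn : ∀ x k, k ≤ n-1 → 0 ≤ lamx x k)
    (Hmono : ∀ x j k, j ≤ k → k ≤ n-1 → lamx x j ≤ lamx x k)
    (x' : Fin n) (u₀ : Fin m) (q : Finset (Fin n)) (hpz : p u₀ x' = 0) :
    Wfun p lamx x' u₀ q = 0 := by
  have hf0 : ffun p lamx u₀ x' = 0 := by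
    unfold ffun
    rw [hpz, min_eq_left (Hnn x' (n-1) (le_refl _))]
    ring
  have hg0 : gfun p lamx u₀ x' = 0 := by
    unfold gfun
    split
    · rfl
    · rw [hf0, zero_div]
  have hrem : remw p lamx u₀ x' = 0 := by
    unfold remw; rw [hf0, hg0]; ring
  unfold Wfun
  rw [hrem, ite_self, add_zero]
  apply Finset.sum_eq_zero
  intro x _
  apply Finset.sum_eq_zero
  intro k hk
  obtain ⟨hk1, hk2⟩ := Finset.mem_Icc.mp hk
  rw [Finset.mul_sum]
  apply Finset.sum_eq_zero
  intro c _
  split_ifs with hc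
  · obtain ⟨hc1, hc2⟩ := hc
    rw [← Finset.mul_prod_erase Finset.univ _ (Finset.mem_univ u₀), ← mul_assoc, hc1]
    rw [thx_mul_rho hp0 hp1 H0 Hmono x hk2 u₀ x', hg0, mul_zero, add_zero]
    by_cases hx : x' = x
    · have hs0 : sfun p lamx u₀ x k = 0 := by
        unfold sfun
        rw [← hx, hpz, min_eq_left (Hnn x' k hk2), min_eq_left (Hnn x' (k-1) (by omega))]
        ring
      rw [hs0, zero_mul, zero_mul]
    · rw [if_neg hx, mul_zero, zero_mul]
  · exact mul_zero _

end Lemmas5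


section Lemmas6

variable {p : Fin m → Fin n → ℝ} {lamx : Fin n → ℕ → ℝ}

theorem W_decod (x' : Fin n) (u₀ : Fin m) (q : Finset (Fin n)) (hx : x' ∉ q) :
    Wfun p lamx x' u₀ q = 0 := by
  unfold Wfun
  have h2 : (if q = univ then remw p lamx u₀ x' else 0) = 0 := by
    split
    · rename_i hq; exact absurd (hq ▸ Finset.mem_univ x') hx
    · rfl
  rw [h2, add_zero]
  apply Finset.sum_eq_zero
  intro x _
  apply Finset.sum_eq_zero
  intro k _
  rw [Finset.mul_sum]
  apply Finset.sum_eq_zero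
  intro c _
  split_ifs with hc
  · obtain ⟨hc1, hc2⟩ := hc
    exfalso
    apply hx
    rw [← hc2]
    unfold Qset
    exact Finset.mem_insert.mpr (Or.inr (Finset.mem_image.mpr ⟨u₀, Finset.mem_univ u₀, hc1⟩))
  · exact mul_zero _

theorem wker_nonneg (hp0 : ∀ u x, 0 ≤ p u x) (hp1 : ∀ u, ∑ x, p u x = 1)
    (H0 : ∀ x, lamx x 0 = 0) (Hmono : ∀ x j k, j ≤ k → k ≤ n-1 → lamx x j ≤ lamx x k)
    (Hlam1 : (∑ x, lamx x (n-1)) ≤ 1) (x' : Fin n) (u₀ : Fin m) (q : Finset (Fin n)) :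
    0 ≤ wker p lamx x' u₀ q := by
  unfold wker
  split
  · split <;> norm_num
  · rename_i hp
    exact div_nonneg (W_nonneg hp0 hp1 H0 Hmono Hlam1 x' u₀ q)
      (hp0 u₀ x')

theorem wker_rowsum (hp0 : ∀ u x, 0 ≤ p u x) (hp1 : ∀ u, ∑ x, p u x = 1)
    (H0 : ∀ x, lamx x 0 = 0) (Hmono : ∀ x j k, j ≤ k → k ≤ n-1 → lamx x j ≤ lamx x k)
    (Hlam1 : (∑ x, lamx x (n-1)) ≤ 1) (x' : Fin n) (u₀ : Fin m) :
    ∑ q : Finset (Fin n), wker p lamx x' u₀ q = 1 := by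
  unfold wker
  split
  · rename_i hp
    rw [Finset.sum_ite_eq' Finset.univ (univ : Finset (Fin n)) (fun _ => (1:ℝ))]
    simp
  · rename_i hp
    rw [← Finset.sum_div, W_rowsum hp0 hp1 H0 Hmono Hlam1 x' u₀]
    exact div_self hp

theorem wker_decod (x' : Fin n) (u₀ : Fin m) (q : Finset (Fin n)) (hx : x' ∉ q) :
    wker p lamx x' u₀ q = 0 := by
  unfold wker
  split
  · split
    · rename_i hq; exact absurd (hq ▸ Finset.mem_univ x') hx
    · rfl
  · rw [W_decod x' u₀ q hx, zero_div]

theorem wker_priv (hp0 : ∀ u x, 0 ≤ p u x) (hp1 : ∀ u, ∑ x, p u x = 1)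
    (H0 : ∀ x, lamx x 0 = 0) (Hnn : ∀ x k, k ≤ n-1 → 0 ≤ lamx x k)
    (Hmono : ∀ x j k, j ≤ k → k ≤ n-1 → lamx x j ≤ lamx x k)
    (Hlam1 : (∑ x, lamx x (n-1)) ≤ 1) (u₀ : Fin m) (q : Finset (Fin n)) :
    ∑ x' : Fin n, p u₀ x' * wker p lamx x' u₀ q = PrQf p lamx q := by
  rw [← W_marg hp0 hp1 H0 Hmono Hlam1 u₀ q]
  apply Finset.sum_congr rfl
  intro x' _
  unfold wker
  split
  · rename_i hp
    rw [hp, zero_mul, W_zero hp0 hp1 H0 Hnn Hmono x' u₀ q hp]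
  · rename_i hp
    field_simp

theorem cost_bound (hp0 : ∀ u x, 0 ≤ p u x) (hp1 : ∀ u, ∑ x, p u x = 1)
    (H0 : ∀ x, lamx x 0 = 0) (Hmono : ∀ x j k, j ≤ k → k ≤ n-1 → lamx x j ≤ lamx x k)
    (Hlam1 : (∑ x, lamx x (n-1)) ≤ 1)
    (HB : ∀ x k, 1 ≤ k → k ≤ n-1 → (univ.filter fun u => p u x < lamx x k).card ≤ k - 1) :
    ∑ q : Finset (Fin n), (q.card : ℝ) * PrQf p lamx q
      ≤ (∑ k ∈ Icc 1 (n-1), (k : ℝ) * (∑ x, thx lamx x k))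
        + n * (1 - ∑ x, lamx x (n-1)) := by
  unfold PrQf
  simp only [mul_add]
  rw [Finset.sum_add_distrib]
  have h2 : ∑ q : Finset (Fin n), (q.card : ℝ) * (if q = univ then 1 - (∑ x, lamx x (n-1)) else 0)
      = n * (1 - ∑ x, lamx x (n-1)) := by
    have : ∀ q ∈ (univ : Finset (Finset (Fin n))),
        (q.card : ℝ) * (if q = univ then 1 - (∑ x, lamx x (n-1)) else 0)
        = if q = univ then (q.card : ℝ) * (1 - ∑ x, lamx x (n-1)) else 0 := by
      intro q _
      split <;> simp
    rw [Finset.sum_congr rfl this,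
        Finset.sum_ite_eq' Finset.univ (univ : Finset (Fin n))
          (fun q => (q.card : ℝ) * (1 - ∑ x, lamx x (n-1)))]
    simp
  rw [h2]
  refine add_le_add ?_ le_rfl
  have swap : ∑ q : Finset (Fin n), (q.card : ℝ) * ∑ x, ∑ k ∈ Icc 1 (n-1), (thx lamx x k *
      ∑ c : Fin m → Fin n, if Qset x c = q then ∏ u, rho p lamx x k u (c u) else 0)
      = ∑ x, ∑ k ∈ Icc 1 (n-1), thx lamx x k *
          ∑ c : Fin m → Fin n, ((Qset x c).card : ℝ) * ∏ u, rho p lamx x k u (c u) := by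
    simp only [Finset.mul_sum]
    rw [Finset.sum_comm]
    apply Finset.sum_congr rfl
    intro x _
    rw [Finset.sum_comm]
    apply Finset.sum_congr rfl
    intro k _
    rw [Finset.sum_comm]
    apply Finset.sum_congr rfl
    intro c _
    have : ∀ q ∈ (univ : Finset (Finset (Fin n))),
        (q.card : ℝ) * (thx lamx x k * if Qset x c = q then ∏ u, rho p lamx x k u (c u) else 0)
        = if Qset x c = q then (q.card : ℝ) * (thx lamx x k * ∏ u, rho p lamx x k u (c u)) else 0 := by
      intro q _
      split <;> simp
    rw [Finset.sum_congr rfl this,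
        Finset.sum_ite_eq Finset.univ (Qset x c)
          (fun q => (q.card : ℝ) * (thx lamx x k * ∏ u, rho p lamx x k u (c u)))]
    simp
    ring
  rw [swap]
  have rhs : ∑ k ∈ Icc 1 (n-1), (k:ℝ) * (∑ x, thx lamx x k)
      = ∑ x, ∑ k ∈ Icc 1 (n-1), (k:ℝ) * thx lamx x k := by
    simp only [Finset.mul_sum]
    exact Finset.sum_comm
  rw [rhs]
  apply Finset.sum_le_sum
  intro x _
  apply Finset.sum_le_sum
  intro k hk
  obtain ⟨hk1, hk2⟩ := Finset.mem_Icc.mp hk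
  have hθ := thx_nonneg (lamx := lamx) Hmono x hk2
  have hsum : ∑ c : Fin m → Fin n, ((Qset x c).card : ℝ) * ∏ u, rho p lamx x k u (c u)
      ≤ (k : ℝ) := by
    calc ∑ c : Fin m → Fin n, ((Qset x c).card : ℝ) * ∏ u, rho p lamx x k u (c u)
        ≤ ∑ c : Fin m → Fin n, (k : ℝ) * ∏ u, rho p lamx x k u (c u) := by
          apply Finset.sum_le_sum
          intro c _
          rcases eq_or_ne (∏ u, rho p lamx x k u (c u)) 0 with h0 | h0
          · rw [h0, mul_zero, mul_zero]
          · apply mul_le_mul_of_nonneg_right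
            · exact_mod_cast card_Qset_le Hmono HB x hk1 hk2 c h0
            · exact Finset.prod_nonneg fun u _ => rho_nonneg Hmono x hk2 u (c u)
      _ = (k : ℝ) := by
          rw [← Finset.mul_sum, sum_prod_rho hp0 hp1 H0 Hmono Hlam1 x hk1 hk2, mul_one]
  calc thx lamx x k * ∑ c : Fin m → Fin n, ((Qset x c).card : ℝ) * ∏ u, rho p lamx x k u (c u)
      ≤ thx lamx x k * (k : ℝ) := mul_le_mul_of_nonneg_left hsum hθ
    _ = (k : ℝ) * thx lamx x k := mul_comm _ _

end Lemmas6



/-- **Achievability part of Theorem 1.** For every conditional pmf `p` on `N` given `U`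
(`|N| = n`, `|U| = n²`), with `λ_{x,i}` the sorted values of `p(x|·)`, `λ_i = Σ_x λ_{x,i}`,
`θ_i = λ_i − λ_{i−1}` for `1 ≤ i ≤ n−1` and `θ_n = 1 − λ_{n−1}`, there exists a decodable
and private query kernel `w` on subsets of `N` with `E[|Q|] ≤ Σ_{i=1}^n i·θ_i`. -/
theorem achievability_theorem_one (n : ℕ) (hn : 2 ≤ n)
    (p : Fin (n ^ 2) → Fin n → ℝ)
    (hp0 : ∀ u x, 0 ≤ p u x)
    (hp1 : ∀ u, ∑ x, p u x = 1)
    (e : Fin n → Fin (n ^ 2) ≃ Fin (n ^ 2))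
    (hmono : ∀ x, Monotone fun i => p (e x i) x)
    (lamx : Fin n → ℕ → ℝ)
    (hlamx0 : ∀ x, lamx x 0 = 0)
    (hlamx : ∀ (x : Fin n) (i : Fin (n ^ 2)), lamx x (i.val + 1) = p (e x i) x)
    (lam : ℕ → ℝ)
    (hlam : ∀ i, lam i = ∑ x, lamx x i)
    (θ : ℕ → ℝ)
    (hθ : ∀ i, 1 ≤ i → i ≤ n - 1 → θ i = lam i - lam (i - 1))
    (hθn : θ n = 1 - lam (n - 1)) :
    ∃ w : Fin n → Fin (n ^ 2) → Finset (Fin n) → ℝ,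
      (∀ x u q, 0 ≤ w x u q) ∧
      (∀ x u, ∑ q : Finset (Fin n), w x u q = 1) ∧
      (∀ x u q, x ∉ q → w x u q = 0) ∧
      ∃ PrQ : Finset (Fin n) → ℝ,
        (∀ u q, ∑ x, p u x * w x u q = PrQ q) ∧
        ∑ q : Finset (Fin n), (q.card : ℝ) * PrQ q ≤ ∑ i ∈ Icc 1 n, (i : ℝ) * θ i := by
  have hnsq : n ≤ n ^ 2 := Nat.le_self_pow two_ne_zero n
  have hkey : ∀ (x : Fin n) (k : ℕ), 1 ≤ k → k ≤ n - 1 →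
      ∀ (h : k - 1 < n ^ 2), lamx x k = p (e x ⟨k - 1, h⟩) x := by
    intro x k hk1 hk2 h
    have h2 := hlamx x ⟨k - 1, h⟩
    have h3 : (⟨k - 1, h⟩ : Fin (n ^ 2)).val + 1 = k := by simp; omega
    rw [h3] at h2
    exact h2
  have H0 : ∀ x, lamx x 0 = 0 := hlamx0
  have Hnn : ∀ (x : Fin n) (k : ℕ), k ≤ n - 1 → 0 ≤ lamx x k := by
    intro x k hk
    rcases Nat.eq_zero_or_pos k with h | h
    · rw [h, H0]
    · have hlt : k - 1 < n ^ 2 := by omega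
      rw [hkey x k h hk hlt]
      exact hp0 _ _
  have Hmono : ∀ (x : Fin n) (j k : ℕ), j ≤ k → k ≤ n - 1 → lamx x j ≤ lamx x k := by
    intro x j k hjk hk
    rcases Nat.eq_zero_or_pos j with h | h
    · rw [h, H0]; exact Hnn x k hk
    · have hj : j ≤ n - 1 := le_trans hjk hk
      have hltj : j - 1 < n ^ 2 := by omega
      have hltk : k - 1 < n ^ 2 := by omega
      rw [hkey x j h hj hltj, hkey x k (le_trans h hjk) hk hltk]
      exact hmono x (by simp [Fin.mk_le_mk]; omega)
  have HB : ∀ (x : Fin n) (k : ℕ), 1 ≤ k → k ≤ n - 1 →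
      (univ.filter fun u => p u x < lamx x k).card ≤ k - 1 := by
    intro x k hk1 hk2
    have hlt : k - 1 < n ^ 2 := by omega
    have : (univ.filter fun u => p u x < lamx x k).card ≤ (Finset.range (k - 1)).card := by
      apply Finset.card_le_card_of_injOn (fun u => ((e x).symm u : ℕ))
      · intro u hu
        rw [Finset.mem_coe, Finset.mem_filter] at hu
        rw [Finset.mem_coe, Finset.mem_range]
        by_contra hge
        push_neg at hge
        have hle : (⟨k - 1, hlt⟩ : Fin (n ^ 2)) ≤ (e x).symm u := by
          rw [Fin.mk_le_mk]; exact hge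
        have := hmono x hle
        simp only [Equiv.apply_symm_apply] at this
        rw [hkey x k hk1 hk2 hlt] at hu
        exact absurd hu.2 (not_lt.mpr this)
      · intro u1 _ u2 _ h
        have : (e x).symm u1 = (e x).symm u2 := Fin.val_injective h
        exact (e x).symm.injective this
    simpa using this
  have Hlam1 : (∑ x, lamx x (n - 1)) ≤ 1 := by
    set S := univ.filter (fun u : Fin (n ^ 2) => ∃ x, p u x < lamx x (n - 1)) with hS
    have hsub : S ⊆ univ.biUnion
        (fun x : Fin n => univ.filter (fun u => p u x < lamx x (n - 1))) := by
      intro u hu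
      rw [hS, Finset.mem_filter] at hu
      obtain ⟨x, hx⟩ := hu.2
      exact Finset.mem_biUnion.mpr ⟨x, Finset.mem_univ x,
        Finset.mem_filter.mpr ⟨Finset.mem_univ u, hx⟩⟩
    have hcard : S.card ≤ n * (n - 2) := by
      calc S.card ≤ _ := Finset.card_le_card hsub
        _ ≤ ∑ x : Fin n, (univ.filter (fun u => p u x < lamx x (n - 1))).card :=
            Finset.card_biUnion_le
        _ ≤ ∑ _x : Fin n, (n - 2) := by
            apply Finset.sum_le_sum
            intro x _
            have := HB x (n - 1) (by omega) (le_refl _)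
            omega
        _ = n * (n - 2) := by simp [mul_comm]
    have hlt : S.card < n ^ 2 := by
      have h1 : n * (n - 2) < n * n :=
        Nat.mul_lt_mul_of_le_of_lt (le_refl n) (by omega) (by omega)
      have h2 : n ^ 2 = n * n := by ring
      omega
    have hex : ∃ u₀ : Fin (n ^ 2), u₀ ∉ S := by
      by_contra hall
      push_neg at hall
      have : S = univ := Finset.eq_univ_iff_forall.mpr hall
      rw [this, Finset.card_univ] at hlt
      simp at hlt
    obtain ⟨u₀, hu₀⟩ := hex
    have hgood : ∀ x, lamx x (n - 1) ≤ p u₀ x := by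
      intro x
      by_contra hx
      push_neg at hx
      exact hu₀ (Finset.mem_filter.mpr ⟨Finset.mem_univ u₀, ⟨x, hx⟩⟩)
    calc ∑ x, lamx x (n - 1) ≤ ∑ x, p u₀ x := Finset.sum_le_sum fun x _ => hgood x
      _ = 1 := hp1 u₀
  refine ⟨wker p lamx, fun x u q => wker_nonneg hp0 hp1 H0 Hmono Hlam1 x u q,
    fun x u => wker_rowsum hp0 hp1 H0 Hmono Hlam1 x u,
    fun x u q hx => wker_decod x u q hx,
    PrQf p lamx, fun u q => wker_priv hp0 hp1 H0 Hnn Hmono Hlam1 u q, ?_⟩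
  have hcost := cost_bound hp0 hp1 H0 Hmono Hlam1 HB
  have heq1 : ∀ k ∈ Icc 1 (n - 1), (k : ℝ) * (∑ x, thx lamx x k) = (k : ℝ) * θ k := by
    intro k hk
    obtain ⟨hk1, hk2⟩ := Finset.mem_Icc.mp hk
    congr 1
    unfold thx
    rw [Finset.sum_sub_distrib, hθ k hk1 hk2, hlam, hlam]
  have heq2 : (n : ℝ) * (1 - ∑ x, lamx x (n - 1)) = (n : ℝ) * θ n := by
    congr 1
    rw [hθn, hlam]
  have hn' : n - 1 + 1 = n := by omega
  have hsplit : ∑ i ∈ Icc 1 n, (i : ℝ) * θ i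
      = (∑ i ∈ Icc 1 (n - 1), (i : ℝ) * θ i) + (n : ℝ) * θ n := by
    conv_lhs => rw [← hn']
    rw [Finset.sum_Icc_succ_top (by omega : 1 ≤ n - 1 + 1), hn']
  rw [hsplit]
  calc ∑ q : Finset (Fin n), (q.card : ℝ) * PrQf p lamx q
      ≤ (∑ k ∈ Icc 1 (n - 1), (k : ℝ) * (∑ x, thx lamx x k))
        + n * (1 - ∑ x, lamx x (n - 1)) := hcost
    _ = (∑ i ∈ Icc 1 (n - 1), (i : ℝ) * θ i) + (n : ℝ) * θ n := by
        rw [Finset.sum_congr rfl heq1, heq2]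

end AchAux
end

section
/- For every conditional pmf p on N given U (with |N| = n, |U| = n²) and every decodable and private query kernel w on the subsets of N, one has E[|Q|] ≥ Σ_{x∈N} max_{u∈U} p(x|u). (Converse part of Theorem 1 in LP form: any achievable rate R satisfies 1/R ≥ Σ_{x∈N} max_{u∈U} p(x|u).) -/
open Finset

/-- **Converse part of Theorem 1 (LP form).** For every conditional pmf `p` on `N` given `U`
and every decodable and private query kernel `w` on subsets of `N`,
`E[|Q|] ≥ Σ_{x∈N} max_{u∈U} p(x|u)`. -/
theorem converse_theorem_one (n : ℕ) (hn : 2 ≤ n)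
    (p : Fin (n ^ 2) → Fin n → ℝ)
    (hp0 : ∀ u x, 0 ≤ p u x)
    (hp1 : ∀ u, ∑ x, p u x = 1)
    (w : Fin n → Fin (n ^ 2) → Finset (Fin n) → ℝ)
    (hw0 : ∀ x u q, 0 ≤ w x u q)
    (hw1 : ∀ x u, ∑ q : Finset (Fin n), w x u q = 1)
    (hdec : ∀ x u q, x ∉ q → w x u q = 0)
    (PrQ : Finset (Fin n) → ℝ)
    (hpriv : ∀ u q, ∑ x, p u x * w x u q = PrQ q) :
    ∑ q : Finset (Fin n), (q.card : ℝ) * PrQ q ≥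
      ∑ x : Fin n,
        Finset.univ.sup'
          ⟨(⟨0, by exact pow_pos (show 0 < n by omega) 2⟩ : Fin (n ^ 2)),
            mem_univ _⟩
          (fun u => p u x) := by
  classical
  have key : ∑ q : Finset (Fin n), (q.card : ℝ) * PrQ q
      = ∑ x : Fin n, ∑ q : Finset (Fin n), (if x ∈ q then PrQ q else 0) := by
    rw [Finset.sum_comm]
    refine Finset.sum_congr rfl fun q _ => ?_
    rw [Finset.sum_ite_mem, Finset.univ_inter, Finset.sum_const, nsmul_eq_mul]
  rw [key]
  refine Finset.sum_le_sum fun x _ => ?_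
  obtain ⟨u, -, hu⟩ := Finset.exists_mem_eq_sup' (s := (Finset.univ : Finset (Fin (n^2))))
    ⟨(⟨0, by exact pow_pos (show 0 < n by omega) 2⟩ : Fin (n ^ 2)), mem_univ _⟩
    (fun u => p u x)
  rw [hu]
  calc p u x = ∑ q : Finset (Fin n), p u x * w x u q := by
        rw [← Finset.mul_sum, hw1, mul_one]
    _ = ∑ q : Finset (Fin n), (if x ∈ q then p u x * w x u q else 0) := by
        refine Finset.sum_congr rfl fun q _ => ?_
        by_cases h : x ∈ q
        · simp [h]
        · simp [h, hdec x u q h]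
    _ ≤ ∑ q : Finset (Fin n), (if x ∈ q then PrQ q else 0) := by
        refine Finset.sum_le_sum fun q _ => ?_
        by_cases h : x ∈ q
        · simp only [h, if_true]
          rw [← hpriv u q]
          exact Finset.single_le_sum (f := fun y => p u y * w y u q)
            (fun y _ => mul_nonneg (hp0 _ _) (hw0 _ _ _)) (mem_univ x)
        · simp [h]
end

section
/- Let U, X, Y be jointly distributed random variables on a discrete probability space, where U takes values in a finite set 𝒰, X takes values in a finite set N, and Y takes values in the set of subsets of N. If Y is independent of U (i.e. P(Y = y, U = u) = P(Y = y)·P(U = u) for all y and u), and P(X = x, Y = y) = 0 whenever x ∉ y, then E[|Y|] = Σ_{y ⊆ N} |y|·P(Y = y) ≥ Σ_{x∈N} max_{u : P(U=u)>0} P(X = x | U = u). (Lemma 2 of the paper.) -/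
open Finset

/-- **Lemma 2.** If `Y` (subset-valued) is independent of `U` and `P(X = x, Y = y) = 0`
whenever `x ∉ y`, then `E[|Y|] ≥ Σ_{x∈N} max_{u : P(U=u)>0} P(X = x | U = u)`.
The joint law of `(U, X, Y)` is given by the pmf `μ`. -/
theorem lemma_two {𝒰 N : Type*} [Fintype 𝒰] [Fintype N] [DecidableEq N]
    (μ : 𝒰 → N → Finset N → ℝ)
    (h0 : ∀ u x y, 0 ≤ μ u x y)
    (h1 : ∑ u, ∑ x, ∑ y : Finset N, μ u x y = 1)
    (hindep : ∀ (u : 𝒰) (y : Finset N),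
      ∑ x, μ u x y = (∑ x, ∑ y' : Finset N, μ u x y') * (∑ u', ∑ x, μ u' x y))
    (hdec : ∀ (x : N) (y : Finset N), x ∉ y → ∑ u, μ u x y = 0) :
    ∑ y : Finset N, (y.card : ℝ) * (∑ u, ∑ x, μ u x y) ≥
      ∑ x : N, ⨆ u : {u : 𝒰 // 0 < ∑ x', ∑ y : Finset N, μ u x' y},
        (∑ y : Finset N, μ u.1 x y) / (∑ x', ∑ y : Finset N, μ u.1 x' y) := by
  set P : Finset N → ℝ := fun y => ∑ u, ∑ x, μ u x y with hP
  have hPnn : ∀ y, 0 ≤ P y := fun y =>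
    Finset.sum_nonneg fun u _ => Finset.sum_nonneg fun x _ => h0 u x y
  -- pointwise vanishing from hdec
  have hzero : ∀ u x y, x ∉ y → μ u x y = 0 := by
    intro u x y hxy
    have := (Finset.sum_eq_zero_iff_of_nonneg (fun u _ => h0 u x y)).mp (hdec x y hxy)
    exact this u (mem_univ u)
  rw [ge_iff_le]
  calc
    ∑ x : N, ⨆ u : {u : 𝒰 // 0 < ∑ x', ∑ y : Finset N, μ u x' y},
        (∑ y : Finset N, μ u.1 x y) / (∑ x', ∑ y : Finset N, μ u.1 x' y)
      ≤ ∑ x : N, ∑ y : Finset N, if x ∈ y then P y else 0 := by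
        refine Finset.sum_le_sum fun x _ => ?_
        refine Real.iSup_le (fun u => ?_)
          (Finset.sum_nonneg fun y _ => by by_cases h : x ∈ y <;> simp [h, hPnn y])
        obtain ⟨u, hu⟩ := u
        simp only
        rw [div_le_iff₀ hu]
        have key : ∀ y : Finset N,
            μ u x y ≤ (if x ∈ y then P y else 0) * (∑ x', ∑ y : Finset N, μ u x' y) := by
          intro y
          by_cases hxy : x ∈ y
          · simp only [hxy, if_true]
            have h1' : μ u x y ≤ ∑ x', μ u x' y :=
              Finset.single_le_sum (fun x' _ => h0 u x' y) (mem_univ x)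
            have := hindep u y
            rw [this] at h1'
            calc μ u x y ≤ (∑ x', ∑ y' : Finset N, μ u x' y') * P y := h1'
              _ = P y * (∑ x', ∑ y' : Finset N, μ u x' y') := mul_comm _ _
          · simp [hxy, hzero u x y hxy]
        calc ∑ y : Finset N, μ u x y
            ≤ ∑ y : Finset N, (if x ∈ y then P y else 0) * (∑ x', ∑ y : Finset N, μ u x' y) :=
              Finset.sum_le_sum fun y _ => key y
          _ = (∑ y : Finset N, if x ∈ y then P y else 0) * (∑ x', ∑ y : Finset N, μ u x' y) :=
              (Finset.sum_mul _ _ _).symm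
    _ = ∑ y : Finset N, (y.card : ℝ) * P y := by
        rw [Finset.sum_comm]
        refine Finset.sum_congr rfl fun y _ => ?_
        rw [Finset.sum_ite_mem, Finset.univ_inter, Finset.sum_const, nsmul_eq_mul]
end

section
/- For every conditional pmf p on N given U (with |N| = n, |U| = n²), one has Σ_{x∈N} λ_{x,n} ≤ 1; consequently λ_{n−1} ≤ 1 and θ_i ≥ 0 for every i = 1,…,n. (Proposition 1 of the paper.) -/
open Finset

/-- **Proposition 1.** For every conditional pmf `p` on `N` given `U` (`|N| = n`,
`|U| = n²`), one has `Σ_{x∈N} λ_{x,n} ≤ 1`; consequently `λ_{n−1} ≤ 1` and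
`θ_i ≥ 0` for every `i = 1,…,n`. -/
theorem proposition_one (n : ℕ) (hn : 2 ≤ n)
    (p : Fin (n ^ 2) → Fin n → ℝ)
    (hp0 : ∀ u x, 0 ≤ p u x)
    (hp1 : ∀ u, ∑ x, p u x = 1)
    (e : Fin n → Fin (n ^ 2) ≃ Fin (n ^ 2))
    (hmono : ∀ x, Monotone fun i => p (e x i) x)
    (lamx : Fin n → ℕ → ℝ)
    (hlamx0 : ∀ x, lamx x 0 = 0)
    (hlamx : ∀ (x : Fin n) (i : Fin (n ^ 2)), lamx x (i.val + 1) = p (e x i) x)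
    (lam : ℕ → ℝ)
    (hlam : ∀ i, lam i = ∑ x, lamx x i)
    (θ : ℕ → ℝ)
    (hθ : ∀ i, 1 ≤ i → i ≤ n - 1 → θ i = lam i - lam (i - 1))
    (hθn : θ n = 1 - lam (n - 1)) :
    (∑ x, lamx x n) ≤ 1 ∧ lam (n - 1) ≤ 1 ∧ ∀ i, 1 ≤ i → i ≤ n → 0 ≤ θ i := by
  have hnsq : n < n ^ 2 := by nlinarith
  have hn1 : n - 1 < n ^ 2 := by omega
  -- step monotonicity of lamx
  have hstep : ∀ (x : Fin n) (i : ℕ), i + 1 ≤ n ^ 2 → lamx x i ≤ lamx x (i + 1) := by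
    intro x i hi
    match i with
    | 0 =>
      rw [hlamx0]
      have := hlamx x ⟨0, by omega⟩
      simp only [Fin.val_mk] at this
      rw [this]
      exact hp0 _ _
    | k + 1 =>
      have h1 : k < n ^ 2 := by omega
      have h2 : k + 1 < n ^ 2 := by omega
      have e1 := hlamx x ⟨k, h1⟩
      have e2 := hlamx x ⟨k + 1, h2⟩
      simp only [Fin.val_mk] at e1 e2
      rw [e1, e2]
      exact hmono x (show (⟨k, h1⟩ : Fin (n ^ 2)) ≤ ⟨k + 1, h2⟩ by
        simp [Fin.le_def])
  -- pigeonhole: a u with p u x ≥ lamx x n for all x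
  have key : ∃ u : Fin (n ^ 2), ∀ x, lamx x n ≤ p u x := by
    set S : Finset (Fin (n ^ 2)) := univ.filter (fun i => i.val < n - 1) with hS
    have hScard : S.card ≤ n - 1 := by
      have : S.card ≤ (univ : Finset (Fin (n - 1))).card := by
        apply Finset.card_le_card_of_injOn
          (fun i => ⟨i.val % (n - 1), Nat.mod_lt _ (by omega)⟩)
        · intro a _; exact mem_univ _
        · intro a ha b hb hab
          have ha2 : a.val < n - 1 := by simpa [hS] using ha
          have hb2 : b.val < n - 1 := by simpa [hS] using hb
          have ha' : a.val % (n - 1) = a.val := Nat.mod_eq_of_lt ha2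
          have hb' : b.val % (n - 1) = b.val := Nat.mod_eq_of_lt hb2
          have := congrArg Fin.val hab
          simp only [Fin.val_mk] at this
          apply Fin.ext; omega
      simpa using this
    set B : Finset (Fin (n ^ 2)) := univ.biUnion (fun x : Fin n => S.image (e x)) with hB
    have hBcard : B.card < n ^ 2 := by
      have h1 : B.card ≤ ∑ _x : Fin n, (n - 1) := by
        refine le_trans (Finset.card_biUnion_le) (Finset.sum_le_sum ?_)
        intro x _
        exact le_trans (Finset.card_image_le) hScard
      simp only [Finset.sum_const, Finset.card_univ, Fintype.card_fin, smul_eq_mul] at h1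
      have : n * (n - 1) < n ^ 2 := by nlinarith [Nat.sub_lt (by omega : 0 < n) (by omega : 0 < 1)]
      omega
    have hnsub : ¬ (univ : Finset (Fin (n ^ 2))) ⊆ B := by
      intro h
      have := Finset.card_le_card h
      simp only [Finset.card_univ, Fintype.card_fin] at this
      omega
    obtain ⟨u, -, hu⟩ := Finset.not_subset.1 hnsub
    refine ⟨u, fun x => ?_⟩
    set i : Fin (n ^ 2) := (e x).symm u with hi
    have hiu : e x i = u := Equiv.apply_symm_apply _ _
    have hni : ¬ (i.val < n - 1) := by
      intro h
      apply hu
      rw [hB]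
      refine Finset.mem_biUnion.2 ⟨x, mem_univ x, Finset.mem_image.2 ⟨i, ?_, hiu⟩⟩
      simp [hS, h]
    have hle : (⟨n - 1, hn1⟩ : Fin (n ^ 2)) ≤ i := by
      simp only [Fin.le_def, Fin.val_mk]; omega
    have e1 := hlamx x ⟨n - 1, hn1⟩
    simp only [Fin.val_mk] at e1
    rw [show n - 1 + 1 = n by omega] at e1
    calc lamx x n = p (e x ⟨n - 1, hn1⟩) x := e1
      _ ≤ p (e x i) x := hmono x hle
      _ = p u x := by rw [hiu]
  obtain ⟨u, hu⟩ := key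
  have part1 : (∑ x, lamx x n) ≤ 1 := by
    calc (∑ x, lamx x n) ≤ ∑ x, p u x := Finset.sum_le_sum (fun x _ => hu x)
      _ = 1 := hp1 u
  have part2 : lam (n - 1) ≤ 1 := by
    rw [hlam]
    refine le_trans (Finset.sum_le_sum (fun x _ => ?_)) part1
    have := hstep x (n - 1) (by omega)
    rwa [show n - 1 + 1 = n by omega] at this
  refine ⟨part1, part2, ?_⟩
  intro i h1 hin
  rcases eq_or_lt_of_le hin with h | h
  · rw [h, hθn]; linarith
  · have hle : i ≤ n - 1 := by omega
    rw [hθ i h1 hle, sub_nonneg, hlam, hlam]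
    refine Finset.sum_le_sum (fun x _ => ?_)
    have := hstep x (i - 1) (by omega)
    rwa [show i - 1 + 1 = i by omega] at this
end

section
/- For every conditional pmf p on N given U (with |N| = n, |U| = n²) and every u ∈ U: Σ_{x∈N} max{ p(x|u) − λ_{x,n−1}, 0 } ≥ Σ_{ℓ=1}^{n−1} Σ_{x : rank_x(u) ≤ ℓ−1} ( λ_{x,ℓ} − λ_{x,ℓ−1} ), where for each x, rank_x(u) denotes the position of u in the fixed nondecreasing enumeration σ_x (so that p(x|σ_x(1)) ≤ ⋯ ≤ p(x|σ_x(n²)) and u = σ_x(rank_x(u))), and λ_{x,0} = 0. (Proposition 2 of the paper.) -/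
open Finset

private lemma tele_sum (f : ℕ → ℝ) (a : ℕ) : ∀ b, a ≤ b →
    ∑ ℓ ∈ Icc (a + 1) b, (f ℓ - f (ℓ - 1)) = f b - f a := by
  intro b hb
  induction b, hb using Nat.le_induction with
  | base => simp [Finset.Icc_eq_empty_of_lt (Nat.lt_succ_self a)]
  | succ b hb ih =>
      rw [Finset.sum_Icc_succ_top (by omega), ih]
      simp only [Nat.add_sub_cancel]
      ring

/-- **Proposition 2.** For every conditional pmf `p` on `N` given `U` and every `u ∈ U`:
`Σ_{x∈N} max{p(x|u) − λ_{x,n−1}, 0} ≥ Σ_{ℓ=1}^{n−1} Σ_{x : rank_x(u) ≤ ℓ−1} (λ_{x,ℓ} − λ_{x,ℓ−1})`,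
where `rank_x(u)` is the (1-based) position of `u` in the fixed nondecreasing enumeration
`e x`, i.e. `rank_x(u) = ((e x).symm u).val + 1`. -/
theorem proposition_two (n : ℕ) (hn : 2 ≤ n)
    (p : Fin (n ^ 2) → Fin n → ℝ)
    (hp0 : ∀ u x, 0 ≤ p u x)
    (hp1 : ∀ u, ∑ x, p u x = 1)
    (e : Fin n → Fin (n ^ 2) ≃ Fin (n ^ 2))
    (hmono : ∀ x, Monotone fun i => p (e x i) x)
    (lamx : Fin n → ℕ → ℝ)
    (hlamx0 : ∀ x, lamx x 0 = 0)
    (hlamx : ∀ (x : Fin n) (i : Fin (n ^ 2)), lamx x (i.val + 1) = p (e x i) x) :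
    ∀ u : Fin (n ^ 2),
      ∑ x, max (p u x - lamx x (n - 1)) 0 ≥
        ∑ ℓ ∈ Icc 1 (n - 1),
          ∑ x ∈ univ.filter (fun x : Fin n => ((e x).symm u).val + 1 ≤ ℓ - 1),
            (lamx x ℓ - lamx x (ℓ - 1)) := by
  intro u
  have hlt : n - 2 < n ^ 2 := lt_of_lt_of_le (by omega) (Nat.le_self_pow two_ne_zero n)
  set r : Fin n → ℕ := fun x => ((e x).symm u).val with hr
  have hrank : ∀ x, lamx x (r x + 1) = p u x := by
    intro x
    have := hlamx x ((e x).symm u)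
    simpa using this
  -- Step 1 : Σ_x λ_{x,n-1} ≤ 1
  have hS : ∑ x, lamx x (n - 1) ≤ 1 := by
    set B : Finset (Fin (n ^ 2)) :=
      univ.filter (fun u' => ∃ x, ((e x).symm u').val < n - 2) with hB
    have hcard : B.card < (univ : Finset (Fin (n ^ 2))).card := by
      have h1 : B ⊆ univ.biUnion
          (fun x : Fin n => univ.filter fun u' => ((e x).symm u').val < n - 2) := by
        intro u' hu'
        simp only [hB, mem_filter, mem_univ, true_and] at hu'
        obtain ⟨x, hx⟩ := hu'
        simp only [mem_biUnion, mem_filter, mem_univ, true_and]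
        exact ⟨x, hx⟩
      have h2 : ∀ x : Fin n,
          (univ.filter fun u' : Fin (n ^ 2) => ((e x).symm u').val < n - 2).card = n - 2 := by
        intro x
        have heq : (univ.filter fun u' : Fin (n ^ 2) => ((e x).symm u').val < n - 2)
            = Finset.map (e x).toEmbedding (Finset.Iio (⟨n - 2, hlt⟩ : Fin (n ^ 2))) := by
          ext u'
          simp only [mem_filter, mem_univ, true_and, Finset.mem_map, Finset.mem_Iio,
            Equiv.coe_toEmbedding, Fin.lt_def]
          constructor
          · intro h; exact ⟨(e x).symm u', h, by simp⟩
          · rintro ⟨i, hi, rfl⟩; simpa using hi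
        rw [heq, Finset.card_map, Fin.card_Iio]
      have h3 : B.card ≤ n * (n - 2) := by
        calc B.card ≤ (univ.biUnion
              (fun x : Fin n => univ.filter fun u' => ((e x).symm u').val < n - 2)).card :=
            Finset.card_le_card h1
          _ ≤ ∑ x : Fin n,
              (univ.filter fun u' : Fin (n ^ 2) => ((e x).symm u').val < n - 2).card :=
            Finset.card_biUnion_le
          _ = n * (n - 2) := by simp [h2, Finset.sum_const, mul_comm]
      have h4 : n * (n - 2) < n ^ 2 := by
        have : n * (n - 2) < n * n :=
          (Nat.mul_lt_mul_left (show 0 < n by omega)).mpr (by omega)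
        calc n * (n - 2) < n * n := this
          _ = n ^ 2 := (sq n).symm
      calc B.card ≤ n * (n - 2) := h3
        _ < n ^ 2 := h4
        _ = (univ : Finset (Fin (n ^ 2))).card := by simp
    obtain ⟨u', hu'⟩ : ∃ u', u' ∉ B := by
      by_contra h
      push_neg at h
      have : B = univ := Finset.eq_univ_iff_forall.mpr h
      rw [this] at hcard
      exact lt_irrefl _ hcard
    have hall : ∀ x, n - 2 ≤ ((e x).symm u').val := by
      intro x
      by_contra h
      exact hu' (by simp only [hB, mem_filter, mem_univ, true_and]; exact ⟨x, by omega⟩)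
    have hx : ∀ x, lamx x (n - 1) ≤ p u' x := by
      intro x
      have h1 : lamx x (n - 1) = p (e x ⟨n - 2, hlt⟩) x := by
        have := hlamx x ⟨n - 2, hlt⟩
        simpa [show n - 2 + 1 = n - 1 by omega] using this
      rw [h1]
      have hle : (⟨n - 2, hlt⟩ : Fin (n ^ 2)) ≤ (e x).symm u' := by
        simpa [Fin.le_def] using hall x
      have := hmono x hle
      simpa using this
    calc ∑ x, lamx x (n - 1) ≤ ∑ x, p u' x := Finset.sum_le_sum fun x _ => hx x
      _ = 1 := hp1 u'
  -- Step 2 : rewrite the RHS by swapping sums and telescoping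
  have hRHS : ∑ ℓ ∈ Icc 1 (n - 1),
        ∑ x ∈ univ.filter (fun x : Fin n => ((e x).symm u).val + 1 ≤ ℓ - 1),
          (lamx x ℓ - lamx x (ℓ - 1))
      = ∑ x : Fin n, (if r x + 1 ≤ n - 1 then lamx x (n - 1) - p u x else 0) := by
    have hstep : ∀ ℓ ∈ Icc 1 (n - 1),
        ∑ x ∈ univ.filter (fun x : Fin n => ((e x).symm u).val + 1 ≤ ℓ - 1),
          (lamx x ℓ - lamx x (ℓ - 1))
        = ∑ x : Fin n, if r x + 1 ≤ ℓ - 1 then (lamx x ℓ - lamx x (ℓ - 1)) else 0 := by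
      intro ℓ _
      rw [Finset.sum_filter]
    rw [Finset.sum_congr rfl hstep, Finset.sum_comm]
    refine Finset.sum_congr rfl fun x _ => ?_
    rw [← Finset.sum_filter]
    have hfil : (Icc 1 (n - 1)).filter (fun ℓ => r x + 1 ≤ ℓ - 1)
        = Icc (r x + 1 + 1) (n - 1) := by
      ext ℓ
      simp only [mem_filter, mem_Icc]
      omega
    rw [hfil]
    by_cases h : r x + 1 ≤ n - 1
    · rw [tele_sum (lamx x) (r x + 1) (n - 1) h, hrank, if_pos h]
    · rw [Finset.Icc_eq_empty (by omega), Finset.sum_empty, if_neg h]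
  rw [ge_iff_le, hRHS]
  -- Step 3 : pointwise bound and conclusion
  have hpt : ∀ x : Fin n,
      p u x - lamx x (n - 1) ≤ max (p u x - lamx x (n - 1)) 0
        - (if r x + 1 ≤ n - 1 then lamx x (n - 1) - p u x else 0) := by
    intro x
    by_cases h : r x + 1 ≤ n - 1
    · rw [if_pos h]
      have := le_max_right (p u x - lamx x (n - 1)) 0
      linarith
    · rw [if_neg h]
      have := le_max_left (p u x - lamx x (n - 1)) 0
      linarith
  have hsum : ∑ x, (p u x - lamx x (n - 1))
      ≤ ∑ x, (max (p u x - lamx x (n - 1)) 0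
        - (if r x + 1 ≤ n - 1 then lamx x (n - 1) - p u x else 0)) :=
    Finset.sum_le_sum fun x _ => hpt x
  rw [Finset.sum_sub_distrib, Finset.sum_sub_distrib] at hsum
  rw [hp1 u] at hsum
  linarith
end

section
/- Let N be a two-element set and U any finite nonempty set, and let p be a conditional pmf on N given U. Then Σ_{x∈N} min_{u∈U} p(x|u) + Σ_{x∈N} max_{u∈U} p(x|u) = 2; equivalently, with n = 2 and θ_1 = Σ_{x∈N} min_{u∈U} p(x|u), θ_2 = 1 − θ_1, one has θ_1 + 2θ_2 = Σ_{x∈N} max_{u∈U} p(x|u). (Corollary 1 of the paper: for n = 2 the achievable rate bound Σ_i i·θ_i and the converse bound Σ_x max_u p(x|u) coincide.) -/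
open Finset

lemma inf'_const_sub {U : Type*} [Fintype U] (s : Finset U) (h : s.Nonempty)
    (f : U → ℝ) (c : ℝ) : s.inf' h (fun u => c - f u) = c - s.sup' h f := by
  apply le_antisymm
  · obtain ⟨u, hu, hu'⟩ := s.exists_mem_eq_sup' h f
    rw [hu']
    exact inf'_le _ hu
  · apply le_inf'
    intro u hu
    have := le_sup' f hu
    linarith

/-- **Corollary 1 (optimality for `n = 2`).** For a two-element set `N` and any finite
nonempty `U`, `Σ_x min_u p(x|u) + Σ_x max_u p(x|u) = 2`; equivalently, with
`θ₁ = Σ_x min_u p(x|u)` and `θ₂ = 1 − θ₁`, `θ₁ + 2θ₂ = Σ_x max_u p(x|u)`. -/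
theorem corollary_one {N U : Type*} [Fintype N] [Fintype U] [Nonempty U]
    (hN : Fintype.card N = 2)
    (p : U → N → ℝ)
    (hp0 : ∀ u x, 0 ≤ p u x)
    (hp1 : ∀ u, ∑ x, p u x = 1) :
    ((∑ x, Finset.univ.inf' Finset.univ_nonempty fun u => p u x) +
        (∑ x, Finset.univ.sup' Finset.univ_nonempty fun u => p u x) = 2) ∧
      ∀ θ1 θ2 : ℝ,
        θ1 = (∑ x, Finset.univ.inf' Finset.univ_nonempty fun u => p u x) →
        θ2 = 1 - θ1 →
        θ1 + 2 * θ2 = ∑ x, Finset.univ.sup' Finset.univ_nonempty fun u => p u x := by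
  classical
  obtain ⟨a, b, hab, huniv⟩ := Finset.card_eq_two.mp (Finset.card_univ.trans hN)
  have hsum : ∀ (g : N → ℝ), ∑ x, g x = g a + g b := by
    intro g
    rw [show (univ : Finset N) = {a, b} from huniv, Finset.sum_pair hab]
  have hpa : ∀ u, p u a = 1 - p u b := by
    intro u
    have := hp1 u
    rw [hsum (p u)] at this
    linarith
  have hpb : ∀ u, p u b = 1 - p u a := by
    intro u; rw [hpa u]; ring
  have hinfa : (Finset.univ.inf' Finset.univ_nonempty fun u => p u a)
      = 1 - Finset.univ.sup' Finset.univ_nonempty fun u => p u b := by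
    rw [← inf'_const_sub]
    exact Finset.inf'_congr _ rfl (fun u _ => hpa u)
  have hinfb : (Finset.univ.inf' Finset.univ_nonempty fun u => p u b)
      = 1 - Finset.univ.sup' Finset.univ_nonempty fun u => p u a := by
    rw [← inf'_const_sub]
    exact Finset.inf'_congr _ rfl (fun u _ => hpb u)
  have key : ((∑ x, Finset.univ.inf' Finset.univ_nonempty fun u => p u x) +
      (∑ x, Finset.univ.sup' Finset.univ_nonempty fun u => p u x) = 2) := by
    rw [hsum, hsum, hinfa, hinfb]
    ring
  refine ⟨key, ?_⟩
  rintro θ1 θ2 rfl rfl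
  linarith
end

section
/- For every conditional pmf p on N given U (with |N| = n, |U| = n²), there exists a multiset query kernel w on the multisets over N of cardinality between 1 and n such that: (i) w(z|x,u) = 0 whenever x ∉ z; (ii) for every multiset z, Σ_{x∈N} p(x|u)·w(z|x,u) is the same for every u ∈ U (write Pr(z) for this common value); and (iii) for every ℓ ∈ {1,…,n}, Σ_{z : |z| = ℓ} Pr(z) = θ_ℓ. (Combined content of Propositions 3 and 4: the algorithm's output is a feasible multiset scheme whose cardinality distribution is exactly (θ_1,…,θ_n).) -/
open Finset

set_option linter.unusedSectionVars false

namespace P34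

variable {n : ℕ}

def rk (e : Fin n → Fin (n ^ 2) ≃ Fin (n ^ 2)) (x : Fin n) (u : Fin (n ^ 2)) : ℕ :=
  ((e x).symm u : ℕ) + 1

def thx (lamx : Fin n → ℕ → ℝ) (x : Fin n) (j : ℕ) : ℝ := lamx x j - lamx x (j - 1)

def sv (lamx : Fin n → ℕ → ℝ) (e : Fin n → Fin (n ^ 2) ≃ Fin (n ^ 2))
    (u : Fin (n ^ 2)) (y : Fin n) : ℝ :=
  lamx y (rk e y u) - lamx y (min (rk e y u) (n - 1))

noncomputable def Sv (lamx : Fin n → ℕ → ℝ) (e : Fin n → Fin (n ^ 2) ≃ Fin (n ^ 2))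
    (u : Fin (n ^ 2)) : ℝ := ∑ y, sv lamx e u y

noncomputable def fv (lamx : Fin n → ℕ → ℝ) (e : Fin n → Fin (n ^ 2) ≃ Fin (n ^ 2))
    (u : Fin (n ^ 2)) (y : Fin n) : ℝ :=
  if Sv lamx e u = 0 then (if (y : ℕ) = 0 then 1 else 0) else sv lamx e u y / Sv lamx e u

noncomputable def pf (lamx : Fin n → ℕ → ℝ) (e : Fin n → Fin (n ^ 2) ≃ Fin (n ^ 2))
    (c : Fin (n ^ 2) → Fin n) : ℝ := ∏ u, fv lamx e u (c u)

def Ds (e : Fin n → Fin (n ^ 2) ≃ Fin (n ^ 2)) (x : Fin n) (j : ℕ) : Finset (Fin (n ^ 2)) :=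
  univ.filter (fun u => rk e x u < j)

def Zb (e : Fin n → Fin (n ^ 2) ≃ Fin (n ^ 2)) (x : Fin n) (j : ℕ)
    (c : Fin (n ^ 2) → Fin n) : Multiset (Fin n) :=
  (insert x ((Ds e x j).image c)).val
    + Multiset.replicate (j - (insert x ((Ds e x j).image c)).card) x

def Zt (hn : 0 < n ^ 2) (c : Fin (n ^ 2) → Fin n) : Multiset (Fin n) :=
  (univ.image c).val + Multiset.replicate (n - (univ.image c).card) (c ⟨0, hn⟩)

noncomputable def G (lamx : Fin n → ℕ → ℝ) (e : Fin n → Fin (n ^ 2) ≃ Fin (n ^ 2))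
    (Z : (Fin (n ^ 2) → Fin n) → Multiset (Fin n)) (s : Finset (Fin (n ^ 2) → Fin n))
    (z : Multiset (Fin n)) : ℝ :=
  ∑ c ∈ s.filter (fun c => Z c = z), pf lamx e c

section lemmas
variable (lamx : Fin n → ℕ → ℝ) (e : Fin n → Fin (n ^ 2) ≃ Fin (n ^ 2))
variable (p : Fin (n ^ 2) → Fin n → ℝ)

lemma rk_pos (x : Fin n) (u : Fin (n ^ 2)) : 1 ≤ rk e x u := Nat.le_add_left 1 _

lemma rk_le (x : Fin n) (u : Fin (n ^ 2)) : rk e x u ≤ n ^ 2 :=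
  Nat.succ_le_of_lt ((e x).symm u).2

lemma p_eq (hlamx : ∀ (x : Fin n) (i : Fin (n ^ 2)), lamx x (i.val + 1) = p (e x i) x)
    (u : Fin (n ^ 2)) (x : Fin n) : p u x = lamx x (rk e x u) := by
  rw [rk, hlamx x ((e x).symm u), Equiv.apply_symm_apply]

section withhyp
variable (hp0 : ∀ u x, 0 ≤ p u x) (hlamx0 : ∀ x, lamx x 0 = 0)
    (hlamx : ∀ (x : Fin n) (i : Fin (n ^ 2)), lamx x (i.val + 1) = p (e x i) x)
    (hmono : ∀ x, Monotone fun i => p (e x i) x)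

include hp0 hlamx0 hlamx hmono

lemma lamx_le (x : Fin n) :
    ∀ i j, i ≤ j → j ≤ n ^ 2 → lamx x i ≤ lamx x j := by
  intro i j hij hj
  rcases Nat.eq_zero_or_pos j with hj0 | hj0
  · have : i = 0 := by omega
    simp [this, hj0]
  · obtain ⟨b, rfl⟩ : ∃ b, j = b + 1 := ⟨j - 1, by omega⟩
    have hb : b < n ^ 2 := by omega
    have hjval : lamx x (b + 1) = p (e x ⟨b, hb⟩) x := hlamx x ⟨b, hb⟩
    rcases Nat.eq_zero_or_pos i with hi0 | hi0
    · rw [hi0, hlamx0, hjval]; exact hp0 _ _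
    · obtain ⟨a, rfl⟩ : ∃ a, i = a + 1 := ⟨i - 1, by omega⟩
      have ha : a < n ^ 2 := by omega
      rw [hjval, hlamx x ⟨a, ha⟩]
      exact hmono x (show (⟨a, ha⟩ : Fin (n ^ 2)) ≤ ⟨b, hb⟩ by
        simp [Fin.le_def]; omega)

lemma lamx_nonneg (x : Fin n) (j : ℕ) (hj : j ≤ n ^ 2) : 0 ≤ lamx x j := by
  have := lamx_le lamx e p hp0 hlamx0 hlamx hmono x 0 j (Nat.zero_le _) hj
  rwa [hlamx0] at this

lemma thx_nonneg (x : Fin n) (j : ℕ) (hj : j ≤ n ^ 2) : 0 ≤ thx lamx x j :=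
  sub_nonneg.2 (lamx_le lamx e p hp0 hlamx0 hlamx hmono x (j - 1) j (by omega) hj)

lemma sv_nonneg (u : Fin (n ^ 2)) (y : Fin n) : 0 ≤ sv lamx e u y :=
  sub_nonneg.2 (lamx_le lamx e p hp0 hlamx0 hlamx hmono y _ _ (min_le_left _ _) (rk_le e y u))

lemma Sv_nonneg (u : Fin (n ^ 2)) : 0 ≤ Sv lamx e u :=
  Finset.sum_nonneg fun y _ => sv_nonneg lamx e p hp0 hlamx0 hlamx hmono u y

lemma sv_le_Sv (u : Fin (n ^ 2)) (y : Fin n) : sv lamx e u y ≤ Sv lamx e u :=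
  Finset.single_le_sum (fun y _ => sv_nonneg lamx e p hp0 hlamx0 hlamx hmono u y) (mem_univ y)

lemma fv_nonneg (u : Fin (n ^ 2)) (y : Fin n) : 0 ≤ fv lamx e u y := by
  rw [fv]
  split_ifs with h1 h2
  · norm_num
  · norm_num
  · exact div_nonneg (sv_nonneg lamx e p hp0 hlamx0 hlamx hmono u y)
      (Sv_nonneg lamx e p hp0 hlamx0 hlamx hmono u)

lemma fv_mul_Sv (u : Fin (n ^ 2)) (y : Fin n) :
    fv lamx e u y * Sv lamx e u = sv lamx e u y := by
  rw [fv]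
  by_cases h1 : Sv lamx e u = 0
  · have h2 := sv_le_Sv lamx e p hp0 hlamx0 hlamx hmono u y
    have h3 := sv_nonneg lamx e p hp0 hlamx0 hlamx hmono u y
    rw [h1] at h2
    rw [if_pos h1, h1, mul_zero]; linarith
  · rw [if_neg h1]; exact div_mul_cancel₀ _ h1

lemma pf_nonneg (c : Fin (n ^ 2) → Fin n) : 0 ≤ pf lamx e c :=
  Finset.prod_nonneg fun u _ => fv_nonneg lamx e p hp0 hlamx0 hlamx hmono u (c u)

end withhyp

lemma fv_sum (hn : 2 ≤ n) (u : Fin (n ^ 2)) : ∑ y, fv lamx e u y = 1 := by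
  by_cases h1 : Sv lamx e u = 0
  · simp only [fv, if_pos h1]
    have h0 : (0 : ℕ) < n := by omega
    have : ∀ y : Fin n, ((y : ℕ) = 0) = (y = ⟨0, h0⟩) := by
      intro y; simp [Fin.ext_iff]
    simp only [this]
    simp
  · simp only [fv, if_neg h1]
    rw [← Finset.sum_div]
    exact div_self h1

lemma pf_sum (hn : 2 ≤ n) : ∑ c : Fin (n ^ 2) → Fin n, pf lamx e c = 1 := by
  rw [show (1 : ℝ) = ∏ u : Fin (n ^ 2), (∑ y, fv lamx e u y) by
    simp [fv_sum lamx e hn]]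
  rw [Fintype.prod_sum fun u y => fv lamx e u y]
  rfl

lemma pf_sum_cond (hn : 2 ≤ n) (u : Fin (n ^ 2)) (x : Fin n) :
    ∑ c ∈ univ.filter (fun c : Fin (n ^ 2) → Fin n => c u = x), pf lamx e c
      = fv lamx e u x := by
  have hset : univ.filter (fun c : Fin (n ^ 2) → Fin n => c u = x)
      = Fintype.piFinset (fun i => if i = u then {x} else univ) := by
    ext c
    simp only [mem_filter, mem_univ, true_and, Fintype.mem_piFinset]
    constructor
    · intro h i; split <;> simp_all
    · intro h; have := h u; simp at this; exact this
  rw [hset]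
  unfold pf
  rw [← Finset.prod_univ_sum]
  rw [Finset.prod_eq_single u]
  · simp
  · intro b _ hb; simp [hb, fv_sum lamx e hn b]
  · simp

lemma tele (x : Fin n) (a : ℕ) :
    ∀ b, a ≤ b → ∑ j ∈ Icc (a + 1) b, thx lamx x j = lamx x b - lamx x a := by
  intro b
  induction b with
  | zero => intro h; interval_cases a; simp
  | succ b ih =>
    intro h
    rcases Nat.lt_or_ge a (b + 1) with h2 | h2
    · have h3 : a ≤ b := by omega
      rw [Finset.sum_Icc_succ_top (by omega), ih h3, thx]
      simp only [Nat.add_sub_cancel]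
      ring
    · have : a = b + 1 := by omega
      subst this
      rw [Finset.Icc_eq_empty (by omega)]
      simp

lemma owner_sum (x : Fin n) (u : Fin (n ^ 2)) :
    ∑ j ∈ Icc 1 (n - 1), (if rk e x u < j then 0 else thx lamx x j)
      = lamx x (min (rk e x u) (n - 1)) - lamx x 0 := by
  have hr := rk_pos e x u
  rw [Finset.sum_ite]
  have h1 : (Icc 1 (n - 1)).filter (fun j => ¬ rk e x u < j)
      = Icc 1 (min (rk e x u) (n - 1)) := by
    ext j; simp only [mem_filter, mem_Icc, not_lt]; omega
  rw [h1]
  have h2 : Icc 1 (min (rk e x u) (n - 1)) = Icc (0 + 1) (min (rk e x u) (n - 1)) := by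
    norm_num
  rw [h2, tele lamx x 0 _ (Nat.zero_le _)]
  simp

lemma hole_sum (x : Fin n) (u : Fin (n ^ 2)) :
    ∑ j ∈ Icc 1 (n - 1), (if rk e x u < j then thx lamx x j else 0)
      = lamx x (n - 1) - lamx x (min (rk e x u) (n - 1)) := by
  have hr := rk_pos e x u
  rw [Finset.sum_ite]
  have h1 : (Icc 1 (n - 1)).filter (fun j => rk e x u < j)
      = Icc (min (rk e x u) (n - 1) + 1) (n - 1) := by
    ext j; simp only [mem_filter, mem_Icc]; omega
  rw [h1, tele lamx x _ _ (min_le_right _ _)]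
  simp

section withp1
variable (hp1 : ∀ u, ∑ x, p u x = 1)
    (hlamx : ∀ (x : Fin n) (i : Fin (n ^ 2)), lamx x (i.val + 1) = p (e x i) x)
include hp1 hlamx

lemma sum_lamx_rk (u : Fin (n ^ 2)) : ∑ x, lamx x (rk e x u) = 1 := by
  rw [← hp1 u]
  exact Finset.sum_congr rfl fun x _ => (p_eq lamx e p hlamx u x).symm

lemma Sv_eq (u : Fin (n ^ 2)) :
    Sv lamx e u = 1 - ∑ x, lamx x (min (rk e x u) (n - 1)) := by
  unfold Sv sv
  rw [Finset.sum_sub_distrib, sum_lamx_rk lamx e p hp1 hlamx]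

lemma holes_total (u : Fin (n ^ 2)) :
    (∑ x, ∑ j ∈ Icc 1 (n - 1), (if rk e x u < j then thx lamx x j else 0))
      + (1 - ∑ x, lamx x (n - 1)) = Sv lamx e u := by
  have : ∀ x : Fin n, ∑ j ∈ Icc 1 (n - 1), (if rk e x u < j then thx lamx x j else 0)
      = lamx x (n - 1) - lamx x (min (rk e x u) (n - 1)) :=
    fun x => hole_sum lamx e x u
  simp only [this]
  rw [Finset.sum_sub_distrib, Sv_eq lamx e p hp1 hlamx]
  ring

end withp1

lemma exists_good_u (hn : 2 ≤ n) :
    ∃ u : Fin (n ^ 2), ∀ x : Fin n, n - 1 ≤ rk e x u := by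
  classical
  set bad : Fin n → Finset (Fin (n ^ 2)) :=
    fun x => univ.filter (fun u => rk e x u < n - 1) with hbad
  have hcard : ∀ x, (bad x).card ≤ n - 2 := by
    intro x
    rw [← Finset.card_range (n - 2)]
    apply Finset.card_le_card_of_injOn (fun u => ((e x).symm u : ℕ))
    · intro u hu
      simp only [Finset.mem_coe, hbad, mem_filter, mem_univ, true_and, rk, Set.mem_setOf_eq] at hu
      simp only [Finset.mem_coe, Finset.mem_range]
      have h1 : ((e x).symm u : ℕ) + 1 < n - 1 := (Finset.mem_filter.1 hu).2
      omega
    · intro a _ b _ hab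
      have := (e x).symm.injective (Fin.val_injective hab)
      exact this
  by_contra hcon
  push_neg at hcon
  have hsub : (univ : Finset (Fin (n ^ 2))) ⊆ univ.biUnion bad := by
    intro u _
    obtain ⟨x, hx⟩ := hcon u
    exact Finset.mem_biUnion.2 ⟨x, mem_univ x, by
      simp only [hbad, mem_filter, mem_univ, true_and]; omega⟩
  have h1 : (n ^ 2 : ℕ) ≤ (univ.biUnion bad).card := by
    calc (n ^ 2 : ℕ) = (univ : Finset (Fin (n ^ 2))).card := by simp
    _ ≤ _ := Finset.card_le_card hsub
  have h2 : (univ.biUnion bad).card ≤ ∑ x : Fin n, (bad x).card :=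
    Finset.card_biUnion_le
  have h3 : ∑ x : Fin n, (bad x).card ≤ n * (n - 2) := by
    calc ∑ x : Fin n, (bad x).card ≤ ∑ _x : Fin n, (n - 2) :=
      Finset.sum_le_sum fun x _ => hcard x
    _ = n * (n - 2) := by simp [mul_comm]
  have h4 : n * (n - 2) < n ^ 2 := by
    calc n * (n - 2) < n * n := by
          have : n - 2 < n := by omega
          exact Nat.mul_lt_mul_of_le_of_lt (le_refl n) this (by omega)
    _ = n ^ 2 := (sq n).symm
  omega

lemma card_Ds_le (x : Fin n) (j : ℕ) : (Ds e x j).card ≤ j - 1 := by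
  rw [← Finset.card_range (j - 1)]
  apply Finset.card_le_card_of_injOn (fun u => ((e x).symm u : ℕ))
  · intro u hu
    simp only [Finset.mem_coe, Ds, mem_filter, mem_univ, true_and, rk, Set.mem_setOf_eq] at hu
    simp only [Finset.mem_coe, Finset.mem_range]
    have h1 : ((e x).symm u : ℕ) + 1 < j := (Finset.mem_filter.1 hu).2
    omega
  · intro a _ b _ hab
    exact (e x).symm.injective (Fin.val_injective hab)

lemma Zb_card (x : Fin n) (j : ℕ) (hj : 1 ≤ j) (c : Fin (n ^ 2) → Fin n) :
    Multiset.card (Zb e x j c) = j := by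
  have h1 : (insert x ((Ds e x j).image c)).card ≤ j := by
    calc (insert x ((Ds e x j).image c)).card ≤ ((Ds e x j).image c).card + 1 :=
      Finset.card_insert_le _ _
    _ ≤ (Ds e x j).card + 1 := by
      have := Finset.card_image_le (s := Ds e x j) (f := c); omega
    _ ≤ (j - 1) + 1 := by have := card_Ds_le e x j; omega
    _ = j := by omega
  rw [Zb]
  rw [Multiset.card_add, Multiset.card_replicate]
  have : (insert x ((Ds e x j).image c)).val.card = (insert x ((Ds e x j).image c)).card := rfl
  omega

lemma mem_Zb_self (x : Fin n) (j : ℕ) (c : Fin (n ^ 2) → Fin n) : x ∈ Zb e x j c := by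
  rw [Zb, Multiset.mem_add]
  left
  rw [Finset.mem_val]
  exact Finset.mem_insert_self x _

lemma mem_Zb_of_mem (x : Fin n) (j : ℕ) (c : Fin (n ^ 2) → Fin n) (u : Fin (n ^ 2))
    (hu : u ∈ Ds e x j) : c u ∈ Zb e x j c := by
  rw [Zb, Multiset.mem_add]
  left
  exact Finset.mem_insert_of_mem (Finset.mem_image_of_mem c hu)

lemma Zt_card (hn2 : 0 < n ^ 2) (c : Fin (n ^ 2) → Fin n) :
    Multiset.card (Zt hn2 c) = n := by
  have h1 : (univ.image c).card ≤ n := by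
    calc (univ.image c).card ≤ (univ : Finset (Fin n)).card := Finset.card_le_univ _
    _ = n := by simp
  rw [Zt, Multiset.card_add, Multiset.card_replicate]
  have : (univ.image c).val.card = (univ.image c).card := rfl
  omega

lemma mem_Zt (hn2 : 0 < n ^ 2) (c : Fin (n ^ 2) → Fin n) (u : Fin (n ^ 2)) :
    c u ∈ Zt hn2 c := by
  rw [Zt, Multiset.mem_add]
  left
  exact Finset.mem_image_of_mem c (mem_univ u)

lemma G_card_ne {Z : (Fin (n ^ 2) → Fin n) → Multiset (Fin n)} {j : ℕ}
    (hZ : ∀ c, Multiset.card (Z c) = j) (s : Finset (Fin (n ^ 2) → Fin n))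
    {z : Multiset (Fin n)} (hz : Multiset.card z ≠ j) : G lamx e Z s z = 0 := by
  apply Finset.sum_eq_zero
  intro c hc
  rw [Finset.mem_filter] at hc
  exact absurd (by rw [← hc.2]; exact hZ c) hz

lemma G_notmem {Z : (Fin (n ^ 2) → Fin n) → Multiset (Fin n)}
    {s : Finset (Fin (n ^ 2) → Fin n)} {x : Fin n}
    (h : ∀ c ∈ s, x ∈ Z c) {z : Multiset (Fin n)} (hx : x ∉ z) :
    G lamx e Z s z = 0 := by
  apply Finset.sum_eq_zero
  intro c hc
  rw [Finset.mem_filter] at hc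
  exact absurd (hc.2 ▸ h c hc.1) hx

lemma G_partition (Z : (Fin (n ^ 2) → Fin n) → Multiset (Fin n)) (u : Fin (n ^ 2))
    (z : Multiset (Fin n)) :
    ∑ x, G lamx e Z (univ.filter (fun c => c u = x)) z = G lamx e Z univ z := by
  unfold G
  have hf : ∀ x : Fin n, (univ.filter (fun c : Fin (n ^ 2) → Fin n => c u = x)).filter
        (fun c => Z c = z)
      = (univ.filter (fun c => Z c = z)).filter (fun c => c u = x) := by
    intro x
    simp only [Finset.filter_filter]
    exact Finset.filter_congr fun c _ => by tauto
  simp only [hf]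
  exact Finset.sum_fiberwise_of_maps_to (fun c _ => mem_univ _) _

lemma G_sym_single (Z : (Fin (n ^ 2) → Fin n) → Multiset (Fin n)) {j : ℕ} (ℓ : ℕ)
    (hZ : ∀ c, Multiset.card (Z c) = j) (s : Finset (Fin (n ^ 2) → Fin n)) :
    ∑ z : Sym (Fin n) ℓ, G lamx e Z s z.1
      = if ℓ = j then ∑ c ∈ s, pf lamx e c else 0 := by
  split_ifs with h
  · subst h
    have hfib : ∀ z : Sym (Fin n) ℓ, s.filter (fun c => Z c = z.1)
        = s.filter (fun c => Sym.mk (Z c) (hZ c) = z) := by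
      intro z
      exact Finset.filter_congr fun c _ => by
        exact ⟨fun h => Sym.ext h,
          fun h => congrArg (fun w : Sym (Fin n) ℓ => (w : Multiset (Fin n))) h⟩
    unfold G
    simp only [hfib]
    exact Finset.sum_fiberwise_of_maps_to (fun c _ => mem_univ _) _
  · apply Finset.sum_eq_zero
    intro z _
    exact G_card_ne lamx e hZ s (by rw [z.2]; exact h)

lemma G_sym_total (Z : (Fin (n ^ 2) → Fin n) → Multiset (Fin n)) {j : ℕ}
    (hj : j ∈ Icc 1 n) (hZ : ∀ c, Multiset.card (Z c) = j)
    (s : Finset (Fin (n ^ 2) → Fin n)) :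
    ∑ ℓ ∈ Icc 1 n, ∑ z : Sym (Fin n) ℓ, G lamx e Z s z.1 = ∑ c ∈ s, pf lamx e c := by
  have : ∀ ℓ ∈ Icc 1 n, ∑ z : Sym (Fin n) ℓ, G lamx e Z s z.1
      = if ℓ = j then ∑ c ∈ s, pf lamx e c else 0 :=
    fun ℓ _ => G_sym_single lamx e Z ℓ hZ s
  rw [Finset.sum_congr rfl this, Finset.sum_ite_eq' (Icc 1 n) j]
  simp [hj]

noncomputable def PrZ0 (lamx : Fin n → ℕ → ℝ) (e : Fin n → Fin (n ^ 2) ≃ Fin (n ^ 2))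
    (hn2 : 0 < n ^ 2) (z : Multiset (Fin n)) : ℝ :=
  (∑ x, ∑ j ∈ Icc 1 (n - 1), thx lamx x j * G lamx e (Zb e x j) univ z)
    + (1 - ∑ x, lamx x (n - 1)) * G lamx e (Zt hn2) univ z

noncomputable def Nv (lamx : Fin n → ℕ → ℝ) (e : Fin n → Fin (n ^ 2) ≃ Fin (n ^ 2))
    (hn2 : 0 < n ^ 2) (x : Fin n) (u : Fin (n ^ 2)) (z : Multiset (Fin n)) : ℝ :=
  (∑ x', ∑ j ∈ Icc 1 (n - 1), thx lamx x' j *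
      (if rk e x' u < j then G lamx e (Zb e x' j) (univ.filter (fun c => c u = x)) z
       else if x = x' then G lamx e (Zb e x' j) univ z else 0))
    + (1 - ∑ x', lamx x' (n - 1)) * G lamx e (Zt hn2) (univ.filter (fun c => c u = x)) z

section main
variable (hn : 2 ≤ n)
    (hp0 : ∀ u x, 0 ≤ p u x) (hp1 : ∀ u, ∑ x, p u x = 1)
    (hlamx0 : ∀ x, lamx x 0 = 0)
    (hlamx : ∀ (x : Fin n) (i : Fin (n ^ 2)), lamx x (i.val + 1) = p (e x i) x)
    (hmono : ∀ x, Monotone fun i => p (e x i) x)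
    (hn2 : 0 < n ^ 2)

include hn hp0 hp1 hlamx0 hlamx hmono

lemma thetan_nonneg : 0 ≤ 1 - ∑ x, lamx x (n - 1) := by
  obtain ⟨u, hu⟩ := exists_good_u e hn
  have h1 : ∑ x, lamx x (n - 1) ≤ ∑ x, lamx x (rk e x u) :=
    Finset.sum_le_sum fun x _ =>
      lamx_le lamx e p hp0 hlamx0 hlamx hmono x _ _ (hu x) (rk_le e x u)
  rw [sum_lamx_rk lamx e p hp1 hlamx u] at h1
  linarith

lemma nsub_le_sq : n - 1 ≤ n ^ 2 := by
  have : n ≤ n ^ 2 := Nat.le_self_pow two_ne_zero n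
  omega

lemma Gnn (Z : (Fin (n ^ 2) → Fin n) → Multiset (Fin n))
    (s : Finset (Fin (n ^ 2) → Fin n)) (z : Multiset (Fin n)) :
    0 ≤ G lamx e Z s z :=
  Finset.sum_nonneg fun c _ => pf_nonneg lamx e p hp0 hlamx0 hlamx hmono c

lemma holes_zero (u : Fin (n ^ 2)) (hSv : Sv lamx e u = 0) :
    (∀ x j, j ∈ Icc 1 (n - 1) → rk e x u < j → thx lamx x j = 0)
      ∧ (1 - ∑ x, lamx x (n - 1)) = 0 := by
  have ht := holes_total lamx e p hp1 hlamx u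
  rw [hSv] at ht
  have hth := thetan_nonneg lamx e p hn hp0 hp1 hlamx0 hlamx hmono
  have hnn : ∀ x ∈ (univ : Finset (Fin n)), ∀ j ∈ Icc 1 (n - 1),
      0 ≤ (if rk e x u < j then thx lamx x j else 0) := by
    intro x _ j hj
    rw [mem_Icc] at hj
    split_ifs
    · exact thx_nonneg lamx e p hp0 hlamx0 hlamx hmono x j
        (le_trans hj.2 (nsub_le_sq lamx e p hn hp0 hp1 hlamx0 hlamx hmono))
    · exact le_refl 0
  have hHnn : 0 ≤ ∑ x, ∑ j ∈ Icc 1 (n - 1), (if rk e x u < j then thx lamx x j else 0) :=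
    Finset.sum_nonneg fun x hx => Finset.sum_nonneg fun j hj => hnn x hx j hj
  have hH : ∑ x, ∑ j ∈ Icc 1 (n - 1), (if rk e x u < j then thx lamx x j else 0) = 0 := by
    linarith
  have hthz : (1 : ℝ) - ∑ x, lamx x (n - 1) = 0 := by linarith
  refine ⟨?_, hthz⟩
  intro x j hj hrk
  have h1 := (Finset.sum_eq_zero_iff_of_nonneg
    (fun x hx => Finset.sum_nonneg fun j hj => hnn x hx j hj)).1 hH x (mem_univ x)
  have h2 := (Finset.sum_eq_zero_iff_of_nonneg (hnn x (mem_univ x))).1 h1 j hj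
  rwa [if_pos hrk] at h2

lemma sv_zero_of_p_zero (u : Fin (n ^ 2)) (x : Fin n) (hpz : p u x = 0) :
    sv lamx e u x = 0 := by
  have h1 : lamx x (rk e x u) = 0 := by rw [← p_eq lamx e p hlamx u x]; exact hpz
  have h2 : 0 ≤ lamx x (min (rk e x u) (n - 1)) :=
    lamx_nonneg lamx e p hp0 hlamx0 hlamx hmono x _
      (le_trans (min_le_left _ _) (rk_le e x u))
  have h3 : lamx x (min (rk e x u) (n - 1)) ≤ lamx x (rk e x u) :=
    lamx_le lamx e p hp0 hlamx0 hlamx hmono x _ _ (min_le_left _ _) (rk_le e x u)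
  rw [sv]
  linarith

lemma fv_zero_of_p_zero (u : Fin (n ^ 2)) (x : Fin n) (hpz : p u x = 0)
    (hSv : Sv lamx e u ≠ 0) : fv lamx e u x = 0 := by
  rw [fv, if_neg hSv, sv_zero_of_p_zero lamx e p hn hp0 hp1 hlamx0 hlamx hmono u x hpz,
    zero_div]

lemma G_zero_of_fv_zero (u : Fin (n ^ 2)) (x : Fin n) (hfv : fv lamx e u x = 0)
    (Z : (Fin (n ^ 2) → Fin n) → Multiset (Fin n)) (z : Multiset (Fin n)) :
    G lamx e Z (univ.filter (fun c => c u = x)) z = 0 := by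
  apply Finset.sum_eq_zero
  intro c hc
  simp only [Finset.mem_filter, Finset.mem_univ, true_and] at hc
  exact Finset.prod_eq_zero (mem_univ u) (by rw [hc.1]; exact hfv)

lemma Nv_nonneg (x : Fin n) (u : Fin (n ^ 2)) (z : Multiset (Fin n)) :
    0 ≤ Nv lamx e hn2 x u z := by
  apply add_nonneg
  · apply Finset.sum_nonneg
    intro x' _
    apply Finset.sum_nonneg
    intro j hj
    rw [mem_Icc] at hj
    apply mul_nonneg
    · exact thx_nonneg lamx e p hp0 hlamx0 hlamx hmono x' j
        (le_trans hj.2 (nsub_le_sq lamx e p hn hp0 hp1 hlamx0 hlamx hmono))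
    · split_ifs
      · exact Gnn lamx e p hn hp0 hp1 hlamx0 hlamx hmono _ _ _
      · exact Gnn lamx e p hn hp0 hp1 hlamx0 hlamx hmono _ _ _
      · exact le_refl 0
  · exact mul_nonneg (thetan_nonneg lamx e p hn hp0 hp1 hlamx0 hlamx hmono)
      (Gnn lamx e p hn hp0 hp1 hlamx0 hlamx hmono _ _ _)

lemma thx_zero_of_p_zero (u : Fin (n ^ 2)) (x : Fin n) (hpz : p u x = 0)
    (j : ℕ) (hj : j ≤ rk e x u) : thx lamx x j = 0 := by
  have hr := rk_le e x u
  have h0 : lamx x (rk e x u) = 0 := by rw [← p_eq lamx e p hlamx u x]; exact hpz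
  have ha : 0 ≤ lamx x (j - 1) :=
    lamx_nonneg lamx e p hp0 hlamx0 hlamx hmono x _ (by omega)
  have hb : lamx x (j - 1) ≤ lamx x j :=
    lamx_le lamx e p hp0 hlamx0 hlamx hmono x _ _ (by omega) (by omega)
  have hc : lamx x j ≤ lamx x (rk e x u) :=
    lamx_le lamx e p hp0 hlamx0 hlamx hmono x _ _ hj hr
  rw [thx]; linarith

lemma Nv_zero_of_p_zero (x : Fin n) (u : Fin (n ^ 2)) (z : Multiset (Fin n))
    (hpz : p u x = 0) : Nv lamx e hn2 x u z = 0 := by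
  unfold Nv
  by_cases hSv : Sv lamx e u = 0
  · obtain ⟨hthx, hthn⟩ := holes_zero lamx e p hn hp0 hp1 hlamx0 hlamx hmono u hSv
    rw [hthn, zero_mul, add_zero]
    apply Finset.sum_eq_zero
    intro x' _
    apply Finset.sum_eq_zero
    intro j hj
    split_ifs with h1 h2
    · rw [hthx x' j hj h1, zero_mul]
    · subst h2
      rw [thx_zero_of_p_zero lamx e p hn hp0 hp1 hlamx0 hlamx hmono u x hpz j
        (by omega), zero_mul]
    · exact mul_zero _
  · have hfv : fv lamx e u x = 0 :=
      fv_zero_of_p_zero lamx e p hn hp0 hp1 hlamx0 hlamx hmono u x hpz hSv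
    have hG : ∀ Z, G lamx e Z (univ.filter (fun c => c u = x)) z = 0 :=
      fun Z => G_zero_of_fv_zero lamx e p hn hp0 hp1 hlamx0 hlamx hmono u x hfv Z z
    rw [hG, mul_zero, add_zero]
    apply Finset.sum_eq_zero
    intro x' _
    apply Finset.sum_eq_zero
    intro j hj
    split_ifs with h1 h2
    · rw [hG, mul_zero]
    · subst h2
      rw [thx_zero_of_p_zero lamx e p hn hp0 hp1 hlamx0 hlamx hmono u x hpz j
        (by omega), zero_mul]
    · exact mul_zero _

lemma Nv_card (x : Fin n) (u : Fin (n ^ 2)) (z : Multiset (Fin n))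
    (hz : Multiset.card z < 1 ∨ n < Multiset.card z) : Nv lamx e hn2 x u z = 0 := by
  unfold Nv
  rw [G_card_ne lamx e (Zt_card hn2) _ (by omega), mul_zero, add_zero]
  apply Finset.sum_eq_zero
  intro x' _
  apply Finset.sum_eq_zero
  intro j hj
  rw [mem_Icc] at hj
  have hcard : Multiset.card z ≠ j := by omega
  split_ifs with h1 h2
  · rw [G_card_ne lamx e (Zb_card e x' j hj.1) _ hcard, mul_zero]
  · rw [G_card_ne lamx e (Zb_card e x' j hj.1) _ hcard, mul_zero]
  · exact mul_zero _

lemma Nv_notmem (x : Fin n) (u : Fin (n ^ 2)) (z : Multiset (Fin n))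
    (hx : x ∉ z) : Nv lamx e hn2 x u z = 0 := by
  unfold Nv
  rw [G_notmem lamx e (x := x) (fun c hc => by
    simp only [Finset.mem_filter, Finset.mem_univ, true_and] at hc
    rw [← hc]
    exact mem_Zt hn2 c u) hx, mul_zero, add_zero]
  apply Finset.sum_eq_zero
  intro x' _
  apply Finset.sum_eq_zero
  intro j hj
  split_ifs with h1 h2
  · rw [G_notmem lamx e (x := x) (fun c hc => by
      simp only [Finset.mem_filter, Finset.mem_univ, true_and] at hc
      rw [← hc]
      exact mem_Zb_of_mem e x' j c u (by simp [Ds, h1])) hx, mul_zero]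
  · subst h2
    rw [G_notmem lamx e (x := x) (fun c _ => mem_Zb_self e x j c) hx, mul_zero]
  · exact mul_zero _

lemma Nv_sum (x : Fin n) (u : Fin (n ^ 2)) :
    ∑ ℓ ∈ Icc 1 n, ∑ z : Sym (Fin n) ℓ, Nv lamx e hn2 x u z.1
      = lamx x (rk e x u) := by
  unfold Nv
  rw [Finset.sum_congr rfl (fun ℓ _ => Finset.sum_add_distrib), Finset.sum_add_distrib]
  have hB : ∑ ℓ ∈ Icc 1 n, ∑ z : Sym (Fin n) ℓ,
      (1 - ∑ x', lamx x' (n - 1)) * G lamx e (Zt hn2) (univ.filter (fun c => c u = x)) z.1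
      = (1 - ∑ x', lamx x' (n - 1)) * fv lamx e u x := by
    simp only [← Finset.mul_sum]
    rw [G_sym_total lamx e (Zt hn2) (mem_Icc.2 ⟨by omega, le_refl n⟩) (Zt_card hn2),
      pf_sum_cond lamx e hn]
  rw [hB]
  -- now the A part
  have hswap : ∑ ℓ ∈ Icc 1 n, ∑ z : Sym (Fin n) ℓ, ∑ x', ∑ j ∈ Icc 1 (n - 1),
        thx lamx x' j *
        (if rk e x' u < j then G lamx e (Zb e x' j) (univ.filter (fun c => c u = x)) z.1
         else if x = x' then G lamx e (Zb e x' j) univ z.1 else 0)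
      = ∑ x', ∑ j ∈ Icc 1 (n - 1), ∑ ℓ ∈ Icc 1 n, ∑ z : Sym (Fin n) ℓ,
        thx lamx x' j *
        (if rk e x' u < j then G lamx e (Zb e x' j) (univ.filter (fun c => c u = x)) z.1
         else if x = x' then G lamx e (Zb e x' j) univ z.1 else 0) := by
    rw [Finset.sum_congr rfl fun ℓ _ => Finset.sum_comm]
    rw [Finset.sum_congr rfl fun ℓ _ => Finset.sum_congr rfl fun x' _ => Finset.sum_comm]
    rw [Finset.sum_comm]
    exact Finset.sum_congr rfl fun x' _ => Finset.sum_comm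
  rw [hswap]
  have hinner : ∀ x', ∀ j ∈ Icc 1 (n - 1), ∑ ℓ ∈ Icc 1 n, ∑ z : Sym (Fin n) ℓ,
        thx lamx x' j *
        (if rk e x' u < j then G lamx e (Zb e x' j) (univ.filter (fun c => c u = x)) z.1
         else if x = x' then G lamx e (Zb e x' j) univ z.1 else 0)
      = thx lamx x' j *
        (if rk e x' u < j then fv lamx e u x else if x = x' then 1 else 0) := by
    intro x' j hj
    rw [mem_Icc] at hj
    have hjIcc : j ∈ Icc 1 n := mem_Icc.2 ⟨hj.1, by omega⟩
    simp only [← Finset.mul_sum]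
    congr 1
    split_ifs with h1 h2
    · rw [G_sym_total lamx e (Zb e x' j) hjIcc (Zb_card e x' j hj.1),
        pf_sum_cond lamx e hn]
    · rw [G_sym_total lamx e (Zb e x' j) hjIcc (Zb_card e x' j hj.1)]
      exact pf_sum lamx e hn
    · simp
  rw [Finset.sum_congr rfl fun x' _ => Finset.sum_congr rfl (hinner x')]
  have hsplit : ∀ x' : Fin n, ∀ j ∈ Icc 1 (n - 1), thx lamx x' j *
        (if rk e x' u < j then fv lamx e u x else if x = x' then 1 else 0)
      = fv lamx e u x * (if rk e x' u < j then thx lamx x' j else 0)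
        + (if x = x' then (if rk e x' u < j then 0 else thx lamx x' j) else 0) := by
    intro x' j _
    split_ifs <;> ring
  rw [Finset.sum_congr rfl fun x' _ => Finset.sum_congr rfl (hsplit x')]
  rw [Finset.sum_congr rfl fun x' _ => Finset.sum_add_distrib, Finset.sum_add_distrib]
  -- first piece: fv * holes
  have hpiece1 : ∑ x' : Fin n, ∑ j ∈ Icc 1 (n - 1),
        fv lamx e u x * (if rk e x' u < j then thx lamx x' j else 0)
      = fv lamx e u x * (Sv lamx e u - (1 - ∑ x', lamx x' (n - 1))) := by
    simp only [← Finset.mul_sum]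
    congr 1
    have := holes_total lamx e p hp1 hlamx u
    linarith
  -- second piece: owner
  have hpiece2 : ∑ x' : Fin n, (if x = x' then
        (∑ j ∈ Icc 1 (n - 1), if rk e x' u < j then 0 else thx lamx x' j) else 0)
      = lamx x (min (rk e x u) (n - 1)) := by
    rw [Finset.sum_ite_eq univ x
      (fun x' => ∑ j ∈ Icc 1 (n - 1), if rk e x' u < j then 0 else thx lamx x' j)]
    rw [if_pos (mem_univ x), owner_sum lamx e x u, hlamx0 x]
    ring
  have hite : ∀ x' : Fin n, ∑ j ∈ Icc 1 (n - 1),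
        (if x = x' then (if rk e x' u < j then 0 else thx lamx x' j) else 0)
      = (if x = x' then
        (∑ j ∈ Icc 1 (n - 1), if rk e x' u < j then 0 else thx lamx x' j) else 0) := by
    intro x'
    split_ifs with h
    · rfl
    · simp
  rw [Finset.sum_congr rfl fun x' _ => hite x', hpiece1, hpiece2]
  have hfS := fv_mul_Sv lamx e p hp0 hlamx0 hlamx hmono u x
  have : sv lamx e u x = lamx x (rk e x u) - lamx x (min (rk e x u) (n - 1)) := rfl
  nlinarith [hfS, this]

lemma Nv_total (u : Fin (n ^ 2)) (z : Multiset (Fin n)) :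
    ∑ x, Nv lamx e hn2 x u z = PrZ0 lamx e hn2 z := by
  unfold Nv PrZ0
  rw [Finset.sum_add_distrib]
  congr 1
  · rw [Finset.sum_comm]
    apply Finset.sum_congr rfl
    intro x' _
    rw [Finset.sum_comm]
    apply Finset.sum_congr rfl
    intro j _
    simp only [← Finset.mul_sum]
    congr 1
    split_ifs with h1
    · exact G_partition lamx e (Zb e x' j) u z
    · rw [Finset.sum_ite_eq' univ x' (fun _ => G lamx e (Zb e x' j) univ z)]
      simp
  · simp only [← Finset.mul_sum]
    congr 1
    exact G_partition lamx e (Zt hn2) u z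

lemma PrZ0_sym (ℓ : ℕ) (hl : ℓ ∈ Icc 1 n) :
    ∑ z : Sym (Fin n) ℓ, PrZ0 lamx e hn2 z.1
      = (if ℓ = n then (1 - ∑ x, lamx x (n - 1))
         else ∑ x, thx lamx x ℓ) := by
  rw [mem_Icc] at hl
  unfold PrZ0
  rw [Finset.sum_add_distrib]
  have hB : ∑ z : Sym (Fin n) ℓ,
      (1 - ∑ x, lamx x (n - 1)) * G lamx e (Zt hn2) univ z.1
      = (if ℓ = n then (1 - ∑ x, lamx x (n - 1)) else 0) := by
    rw [← Finset.mul_sum, G_sym_single lamx e (Zt hn2) ℓ (Zt_card hn2) univ]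
    split_ifs with h
    · rw [pf_sum lamx e hn, mul_one]
    · rw [mul_zero]
  have hA : ∑ z : Sym (Fin n) ℓ, ∑ x, ∑ j ∈ Icc 1 (n - 1),
        thx lamx x j * G lamx e (Zb e x j) univ z.1
      = (if ℓ = n then 0 else ∑ x, thx lamx x ℓ) := by
    rw [Finset.sum_comm]
    have hx1 : ∀ x : Fin n, ∑ z : Sym (Fin n) ℓ, ∑ j ∈ Icc 1 (n - 1),
          thx lamx x j * G lamx e (Zb e x j) univ z.1
        = ∑ j ∈ Icc 1 (n - 1), thx lamx x j * (if ℓ = j then 1 else 0) := by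
      intro x
      rw [Finset.sum_comm]
      apply Finset.sum_congr rfl
      intro j hj
      rw [mem_Icc] at hj
      rw [← Finset.mul_sum, G_sym_single lamx e (Zb e x j) ℓ (Zb_card e x j hj.1) univ]
      split_ifs with h
      · rw [pf_sum lamx e hn]
      · simp
    rw [Finset.sum_congr rfl fun x _ => hx1 x]
    split_ifs with h
    · subst h
      apply Finset.sum_eq_zero
      intro x _
      apply Finset.sum_eq_zero
      intro j hj
      rw [mem_Icc] at hj
      rw [if_neg (by omega), mul_zero]
    · apply Finset.sum_congr rfl
      intro x _
      have : ℓ ∈ Icc 1 (n - 1) := mem_Icc.2 ⟨hl.1, by omega⟩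
      simp only [mul_ite, mul_one, mul_zero]
      rw [Finset.sum_ite_eq (Icc 1 (n - 1)) ℓ (fun j => thx lamx x j), if_pos this]
  rw [hA, hB]
  split_ifs <;> simp

end main
end lemmas
end P34




/-- **Propositions 3 and 4 combined.** For every conditional pmf `p` on `N` given `U`,
there is a multiset query kernel `w` on multisets over `N` of cardinality between `1`
and `n` that is decodable (`w(z|x,u) = 0` if `x ∉ z`), private (the induced distribution
`Pr(z) = Σ_x p(x|u)·w(z|x,u)` does not depend on `u`), and whose cardinality distribution
is exactly `(θ_1,…,θ_n)`. -/
theorem propositions_three_four (n : ℕ) (hn : 2 ≤ n)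
    (p : Fin (n ^ 2) → Fin n → ℝ)
    (hp0 : ∀ u x, 0 ≤ p u x)
    (hp1 : ∀ u, ∑ x, p u x = 1)
    (e : Fin n → Fin (n ^ 2) ≃ Fin (n ^ 2))
    (hmono : ∀ x, Monotone fun i => p (e x i) x)
    (lamx : Fin n → ℕ → ℝ)
    (hlamx0 : ∀ x, lamx x 0 = 0)
    (hlamx : ∀ (x : Fin n) (i : Fin (n ^ 2)), lamx x (i.val + 1) = p (e x i) x)
    (lam : ℕ → ℝ)
    (hlam : ∀ i, lam i = ∑ x, lamx x i)
    (θ : ℕ → ℝ)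
    (hθ : ∀ i, 1 ≤ i → i ≤ n - 1 → θ i = lam i - lam (i - 1))
    (hθn : θ n = 1 - lam (n - 1)) :
    ∃ w : Fin n → Fin (n ^ 2) → Multiset (Fin n) → ℝ,
      (∀ x u z, 0 ≤ w x u z) ∧
      (∀ x u z, (Multiset.card z < 1 ∨ n < Multiset.card z) → w x u z = 0) ∧
      (∀ x u, ∑ ℓ ∈ Icc 1 n, ∑ z : Sym (Fin n) ℓ, w x u z.1 = 1) ∧
      (∀ x u z, x ∉ z → w x u z = 0) ∧
      ∃ PrZ : Multiset (Fin n) → ℝ,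
        (∀ u z, ∑ x, p u x * w x u z = PrZ z) ∧
        (∀ ℓ ∈ Icc 1 n, ∑ z : Sym (Fin n) ℓ, PrZ z.1 = θ ℓ) := by

  classical
  have hn2 : 0 < n ^ 2 := by positivity
  refine ⟨fun x u z => if p u x = 0 then (if z = {x} then 1 else 0)
      else (p u x)⁻¹ * P34.Nv lamx e hn2 x u z, ?_, ?_, ?_, ?_, ?_⟩
  · intro x u z
    dsimp only
    split_ifs
    · norm_num
    · norm_num
    · exact mul_nonneg (inv_nonneg.2 (hp0 u x))
        (P34.Nv_nonneg lamx e p hn hp0 hp1 hlamx0 hlamx hmono hn2 x u z)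
  · intro x u z hz
    dsimp only
    split_ifs with h1 h2
    · exfalso
      rw [h2] at hz
      simp only [Multiset.card_singleton] at hz
      omega
    · rfl
    · rw [P34.Nv_card lamx e p hn hp0 hp1 hlamx0 hlamx hmono hn2 x u z hz, mul_zero]
  · intro x u
    dsimp only
    by_cases h : p u x = 0
    · simp only [if_pos h]
      have hcard : Multiset.card ({x} : Multiset (Fin n)) = 1 := by simp
      have h1 : ∀ ℓ ∈ Icc 1 n, (∑ z : Sym (Fin n) ℓ,
          if (z.1 : Multiset (Fin n)) = {x} then (1 : ℝ) else 0)
          = if ℓ = 1 then 1 else 0 := by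
        intro ℓ _
        split_ifs with h2
        · subst h2
          calc ∑ z : Sym (Fin n) 1, (if z.1 = ({x} : Multiset (Fin n)) then (1:ℝ) else 0)
              = ∑ z : Sym (Fin n) 1,
                  (if z = (⟨{x}, hcard⟩ : Sym (Fin n) 1) then (1:ℝ) else 0) := by
                apply Finset.sum_congr rfl
                intro z _
                apply if_congr _ rfl rfl
                constructor
                · intro hzz
                  exact Subtype.ext hzz
                · intro hzz
                  rw [hzz]
            _ = 1 := by
                simp
                rw [Finset.card_eq_one]
                exact ⟨⟨{x}, hcard⟩, by
                  ext y; simp only [Finset.mem_filter, Finset.mem_univ, true_and]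
                  exact ⟨fun h => h ▸ Finset.mem_singleton_self _, fun h => Finset.mem_singleton.1 h⟩⟩
        · apply Finset.sum_eq_zero
          intro z _
          rw [if_neg]
          intro hzz
          have hz2 := z.2
          rw [hzz] at hz2
          simp only [Multiset.card_singleton] at hz2
          exact h2 hz2.symm
      rw [Finset.sum_congr rfl h1, Finset.sum_ite_eq' (Icc 1 n) 1 (fun _ => (1:ℝ))]
      rw [if_pos (mem_Icc.2 ⟨le_refl 1, by omega⟩)]
    · simp only [if_neg h]
      simp only [← Finset.mul_sum]
      rw [P34.Nv_sum lamx e p hn hp0 hp1 hlamx0 hlamx hmono hn2 x u,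
        ← P34.p_eq lamx e p hlamx u x]
      exact inv_mul_cancel₀ h
  · intro x u z hx
    dsimp only
    split_ifs with h1 h2
    · exfalso
      apply hx
      rw [h2]
      simp
    · rfl
    · rw [P34.Nv_notmem lamx e p hn hp0 hp1 hlamx0 hlamx hmono hn2 x u z hx, mul_zero]
  · refine ⟨P34.PrZ0 lamx e hn2, ?_, ?_⟩
    · intro u z
      rw [← P34.Nv_total lamx e p hn hp0 hp1 hlamx0 hlamx hmono hn2 u z]
      apply Finset.sum_congr rfl
      intro x _
      dsimp only
      by_cases h : p u x = 0
      · rw [if_pos h, h, zero_mul]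
        exact (P34.Nv_zero_of_p_zero lamx e p hn hp0 hp1 hlamx0 hlamx hmono hn2 x u z h).symm
      · rw [if_neg h, ← mul_assoc, mul_inv_cancel₀ h, one_mul]
    · intro ℓ hl
      rw [P34.PrZ0_sym lamx e p hn hp0 hp1 hlamx0 hlamx hmono hn2 ℓ hl]
      rw [mem_Icc] at hl
      split_ifs with h
      · subst h
        rw [hθn, hlam]
      · rw [hθ ℓ hl.1 (by omega), hlam, hlam]
        unfold P34.thx
        rw [Finset.sum_sub_distrib]
end

section
/- Let p be a conditional pmf on N given U, and let w be a multiset query kernel on the multisets over N of cardinality between 1 and n satisfying decodability (w(z|x,u) = 0 whenever x ∉ z) and privacy (Σ_{x∈N} p(x|u)·w(z|x,u) is the same for every u, denoted Pr(z)). Define w'(q|x,u) = Σ_{z : toFinset(z) = q} w(z|x,u) for subsets q ⊆ N. Then w' is a decodable and private query kernel on the subsets of N, and its average cardinality satisfies Σ_{q⊆N} |q|·Pr'(q) ≤ Σ_{z} |z|·Pr(z), where Pr'(q) is the common value of Σ_{x∈N} p(x|u)·w'(q|x,u). (The multiset-to-set reduction used to derive Theorem 1's achievability from the algorithm.) -/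
open Finset

/-- **Multiset-to-set reduction.** Given a decodable, private multiset query kernel `w`
supported on multisets of cardinality between `1` and `n`, the kernel
`w'(q|x,u) = Σ_{z : toFinset z = q} w(z|x,u)` on subsets of `N` is decodable and private,
and its average cardinality satisfies `Σ_q |q|·Pr'(q) ≤ Σ_z |z|·Pr(z)`. -/
theorem multiset_to_set_reduction (n : ℕ) (hn : 2 ≤ n)
    (p : Fin (n ^ 2) → Fin n → ℝ)
    (hp0 : ∀ u x, 0 ≤ p u x)
    (hp1 : ∀ u, ∑ x, p u x = 1)
    (w : Fin n → Fin (n ^ 2) → Multiset (Fin n) → ℝ)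
    (hw0 : ∀ x u z, 0 ≤ w x u z)
    (hwsupp : ∀ x u z, (Multiset.card z < 1 ∨ n < Multiset.card z) → w x u z = 0)
    (hw1 : ∀ x u, ∑ ℓ ∈ Icc 1 n, ∑ z : Sym (Fin n) ℓ, w x u z.1 = 1)
    (hdec : ∀ x u z, x ∉ z → w x u z = 0)
    (PrZ : Multiset (Fin n) → ℝ)
    (hpriv : ∀ u z, ∑ x, p u x * w x u z = PrZ z)
    (w' : Fin n → Fin (n ^ 2) → Finset (Fin n) → ℝ)
    (hw' : ∀ x u q, w' x u q =
      ∑ ℓ ∈ Icc 1 n, ∑ z : Sym (Fin n) ℓ, if z.1.toFinset = q then w x u z.1 else 0) :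
    (∀ x u q, 0 ≤ w' x u q) ∧
    (∀ x u, ∑ q : Finset (Fin n), w' x u q = 1) ∧
    (∀ x u q, x ∉ q → w' x u q = 0) ∧
    ∃ Pr' : Finset (Fin n) → ℝ,
      (∀ u q, ∑ x, p u x * w' x u q = Pr' q) ∧
      ∑ q : Finset (Fin n), (q.card : ℝ) * Pr' q ≤
        ∑ ℓ ∈ Icc 1 n, ∑ z : Sym (Fin n) ℓ, (Multiset.card z.1 : ℝ) * PrZ z.1 := by
  have hPr0 : ∀ z, 0 ≤ PrZ z := by
    intro z
    rw [← hpriv ⟨0, by nlinarith⟩ z]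
    exact Finset.sum_nonneg fun x _ => mul_nonneg (hp0 _ _) (hw0 _ _ _)
  refine ⟨?_, ?_, ?_,
    fun q => ∑ ℓ ∈ Icc 1 n, ∑ z : Sym (Fin n) ℓ, if z.1.toFinset = q then PrZ z.1 else 0,
    ?_, ?_⟩
  · intro x u q
    rw [hw' x u q]
    refine Finset.sum_nonneg fun ℓ _ => Finset.sum_nonneg fun z _ => ?_
    split_ifs
    · exact hw0 _ _ _
    · exact le_rfl
  · intro x u
    simp_rw [hw']
    rw [Finset.sum_comm]
    have h : ∀ ℓ ∈ Icc 1 n,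
        (∑ q : Finset (Fin n), ∑ z : Sym (Fin n) ℓ, if z.1.toFinset = q then w x u z.1 else 0)
        = ∑ z : Sym (Fin n) ℓ, w x u z.1 := by
      intro ℓ _
      rw [Finset.sum_comm]
      refine Finset.sum_congr rfl fun z _ => ?_
      rw [Finset.sum_eq_single_of_mem (z.1.toFinset) (Finset.mem_univ _) (fun b _ hb => if_neg (Ne.symm hb))]
      exact if_pos rfl
    rw [Finset.sum_congr rfl h, hw1]
  · intro x u q hx
    rw [hw' x u q]
    refine Finset.sum_eq_zero fun ℓ _ => Finset.sum_eq_zero fun z _ => ?_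
    split_ifs with h
    · exact hdec x u z.1 fun hz => hx (h ▸ Multiset.mem_toFinset.mpr hz)
    · rfl
  · intro u q
    simp_rw [hw', Finset.mul_sum, mul_ite, mul_zero]
    rw [Finset.sum_comm]
    refine Finset.sum_congr rfl fun ℓ _ => ?_
    rw [Finset.sum_comm]
    refine Finset.sum_congr rfl fun z _ => ?_
    split_ifs with h
    · exact hpriv u z.1
    · simp
  · have hL : (∑ q : Finset (Fin n), (q.card : ℝ) *
        ∑ ℓ ∈ Icc 1 n, ∑ z : Sym (Fin n) ℓ, if z.1.toFinset = q then PrZ z.1 else 0)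
        = ∑ ℓ ∈ Icc 1 n, ∑ z : Sym (Fin n) ℓ, (z.1.toFinset.card : ℝ) * PrZ z.1 := by
      simp_rw [Finset.mul_sum, mul_ite, mul_zero]
      rw [Finset.sum_comm]
      refine Finset.sum_congr rfl fun ℓ _ => ?_
      rw [Finset.sum_comm]
      refine Finset.sum_congr rfl fun z _ => ?_
      rw [Finset.sum_eq_single_of_mem (z.1.toFinset) (Finset.mem_univ _) (fun b _ hb => if_neg (Ne.symm hb))]
      exact if_pos rfl
    rw [hL]
    refine Finset.sum_le_sum fun ℓ _ => Finset.sum_le_sum fun z _ => ?_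
    exact mul_le_mul_of_nonneg_right (by exact_mod_cast Multiset.toFinset_card_le z.1) (hPr0 z.1)
end

section
/- Let n ≥ 2 be an integer, δ ≥ 1 an integer, and α a real number with 1/n ≤ α < 1. Let P be the n × n matrix with P_{ii} = α and P_{ij} = (1−α)/(n−1) for i ≠ j. Then (P^{δ+1})_{ik} > 0 for all i, k, and the quantity P_{jk}·(P^δ)_{ij}/(P^{δ+1})_{ik} equals: σ1 if i = j = k; σ2 if i = j ≠ k; σ3 if i ≠ j and j = k; σ4 if i = k ≠ j; and σ5 if i, j, k are pairwise distinct. (Equation (eq:cor2_proof) of the paper.) -/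
open Finset

/-- `σ1 = α((n−1)^δ + (n−1)(nα−1)^δ)/((n−1)^δ + (nα−1)^{δ+1})`. -/
noncomputable def sig1 (n : ℕ) (α : ℝ) (δ : ℕ) : ℝ :=
  α * (((n : ℝ) - 1) ^ δ + ((n : ℝ) - 1) * ((n : ℝ) * α - 1) ^ δ) /
    (((n : ℝ) - 1) ^ δ + ((n : ℝ) * α - 1) ^ (δ + 1))

/-- `σ2 = (1−α)((n−1)^δ + (n−1)(nα−1)^δ)/((n−1)^{δ+1} − (nα−1)^{δ+1})`. -/
noncomputable def sig2 (n : ℕ) (α : ℝ) (δ : ℕ) : ℝ :=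
  (1 - α) * (((n : ℝ) - 1) ^ δ + ((n : ℝ) - 1) * ((n : ℝ) * α - 1) ^ δ) /
    (((n : ℝ) - 1) ^ (δ + 1) - ((n : ℝ) * α - 1) ^ (δ + 1))

/-- `σ3 = α((n−1)^{δ+1} − (n−1)(nα−1)^δ)/((n−1)^{δ+1} − (nα−1)^{δ+1})`. -/
noncomputable def sig3 (n : ℕ) (α : ℝ) (δ : ℕ) : ℝ :=
  α * (((n : ℝ) - 1) ^ (δ + 1) - ((n : ℝ) - 1) * ((n : ℝ) * α - 1) ^ δ) /
    (((n : ℝ) - 1) ^ (δ + 1) - ((n : ℝ) * α - 1) ^ (δ + 1))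

/-- `σ4 = (1−α)((n−1)^δ − (nα−1)^δ)/((n−1)((n−1)^δ + (nα−1)^{δ+1}))`. -/
noncomputable def sig4 (n : ℕ) (α : ℝ) (δ : ℕ) : ℝ :=
  (1 - α) * (((n : ℝ) - 1) ^ δ - ((n : ℝ) * α - 1) ^ δ) /
    (((n : ℝ) - 1) * (((n : ℝ) - 1) ^ δ + ((n : ℝ) * α - 1) ^ (δ + 1)))

/-- `σ5 = (1−α)((n−1)^δ − (nα−1)^δ)/((n−1)^{δ+1} − (nα−1)^{δ+1})`. -/
noncomputable def sig5 (n : ℕ) (α : ℝ) (δ : ℕ) : ℝ :=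
  (1 - α) * (((n : ℝ) - 1) ^ δ - ((n : ℝ) * α - 1) ^ δ) /
    (((n : ℝ) - 1) ^ (δ + 1) - ((n : ℝ) * α - 1) ^ (δ + 1))

set_option maxHeartbeats 1000000
/-- **Equation (eq:cor2_proof).** For the symmetric transition matrix with `1/n ≤ α < 1`,
all entries of `P^{δ+1}` are positive and `P_{jk}·(P^δ)_{ij}/(P^{δ+1})_{ik}` equals `σ1` if
`i = j = k`, `σ2` if `i = j ≠ k`, `σ3` if `i ≠ j = k`, `σ4` if `i = k ≠ j`, and `σ5` if
`i, j, k` are pairwise distinct. -/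
theorem symmetric_markov_likelihoods (n δ : ℕ) (hn : 2 ≤ n) (hδ : 1 ≤ δ)
    (α : ℝ) (hα1 : 1 / (n : ℝ) ≤ α) (hα2 : α < 1)
    (P : Matrix (Fin n) (Fin n) ℝ)
    (hP : ∀ i j, P i j = if i = j then α else (1 - α) / ((n : ℝ) - 1)) :
    (∀ i k : Fin n, 0 < (P ^ (δ + 1)) i k) ∧
    ∀ i j k : Fin n,
      P j k * (P ^ δ) i j / (P ^ (δ + 1)) i k =
        if i = j ∧ j = k then sig1 n α δ
        else if i = j then sig2 n α δ
        else if j = k then sig3 n α δ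
        else if i = k then sig4 n α δ
        else sig5 n α δ := by
  have hn2 : (2:ℝ) ≤ (n:ℝ) := by exact_mod_cast hn
  have hnpos : (0:ℝ) < n := by linarith
  have hn0 : (n:ℝ) ≠ 0 := ne_of_gt hnpos
  obtain ⟨c, hc_def⟩ : ∃ x : ℝ, x = (n:ℝ) - 1 := ⟨_, rfl⟩
  obtain ⟨b, hb_def⟩ : ∃ x : ℝ, x = (n:ℝ) * α - 1 := ⟨_, rfl⟩
  have hc0 : 0 < c := by rw [hc_def]; linarith
  have hb0 : 0 ≤ b := by
    have h1 : 1 ≤ (n:ℝ) * α := by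
      have := (div_le_iff₀ hnpos).mp hα1
      nlinarith
    rw [hb_def]; linarith
  have hbc : b < c := by rw [hb_def, hc_def]; nlinarith
  obtain ⟨β, hβ_def⟩ : ∃ x : ℝ, x = b / c := ⟨_, rfl⟩
  have hβ0 : 0 ≤ β := by rw [hβ_def]; exact div_nonneg hb0 hc0.le
  have hβ1 : β < 1 := by rw [hβ_def]; exact (div_lt_one hc0).mpr hbc
  have hcn : (n:ℝ) - 1 ≠ 0 := by linarith
  have hPjk : ∀ j k : Fin n, P j k = (1 - β)/n + if j = k then β else 0 := by
    intro j k; rw [hP]; split_ifs with h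
    · rw [hβ_def, hb_def, hc_def]; field_simp [hcn]; ring
    · rw [hβ_def, hb_def, hc_def]; field_simp [hcn]; ring
  have key : ∀ (m : ℕ) (i k : Fin n),
      (P ^ m) i k = (1 - β^m)/n + if i = k then β^m else 0 := by
    intro m
    induction m with
    | zero =>
      intro i k
      simp only [pow_zero, Matrix.one_apply]
      split_ifs <;> simp
    | succ m ih =>
      intro i k
      rw [pow_succ, Matrix.mul_apply]
      have hterm : ∀ j : Fin n,
          (P ^ m) i j * P j k =
          (1 - β^m)/n * ((1-β)/n) + (if j = k then (1-β^m)/n * β else 0)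
            + (if i = j then β^m * ((1-β)/n) else 0)
            + (if i = j then (if j = k then β^m * β else 0) else 0) := by
        intro j
        rw [ih, hPjk]
        split_ifs <;> ring
      simp only [hterm, Finset.sum_add_distrib, Finset.sum_const, Finset.card_univ,
        Fintype.card_fin, nsmul_eq_mul, Finset.sum_ite_eq, Finset.sum_ite_eq',
        Finset.mem_univ, if_true]
      split_ifs with h <;> field_simp <;> ring
  have hβp1 : β ^ (δ + 1) < 1 := pow_lt_one₀ hβ0 hβ1 (Nat.succ_ne_zero δ)
  have hβpnn : ∀ m : ℕ, 0 ≤ β ^ m := fun m => pow_nonneg hβ0 m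
  have hOpos : 0 < (1 - β^(δ+1))/n := div_pos (by linarith) hnpos
  have hpos : ∀ i k : Fin n, 0 < (P ^ (δ + 1)) i k := by
    intro i k
    rw [key]
    have := hβpnn (δ+1)
    split_ifs <;> linarith
  refine ⟨hpos, ?_⟩
  intro i j k
  -- basic positivity facts for the algebra
  have hcδ : (0:ℝ) < c ^ δ := pow_pos hc0 δ
  have hD1 : (0:ℝ) < c ^ δ + b ^ (δ+1) :=
    add_pos_of_pos_of_nonneg hcδ (pow_nonneg hb0 _)
  have hbcp : b ^ (δ+1) < c ^ (δ+1) := pow_lt_pow_left₀ hbc hb0 (Nat.succ_ne_zero δ)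
  have hD2 : (0:ℝ) < c ^ (δ+1) - b ^ (δ+1) := by linarith
  have hDd : (0:ℝ) < (1 - β^(δ+1))/n + β^(δ+1) := by
    have := hβpnn (δ+1); linarith
  have hD1' : ((n:ℝ)-1)^δ + ((n:ℝ)*α-1)^(δ+1) ≠ 0 := by
    rw [← hc_def, ← hb_def]; exact hD1.ne'
  have hD2' : ((n:ℝ)-1)^(δ+1) - ((n:ℝ)*α-1)^(δ+1) ≠ 0 := by
    rw [← hc_def, ← hb_def]; exact hD2.ne'
  have hD4' : ((n:ℝ)-1) * (((n:ℝ)-1)^δ + ((n:ℝ)*α-1)^(δ+1)) ≠ 0 := by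
    rw [← hc_def, ← hb_def]; exact (mul_pos hc0 hD1).ne'
  rw [key, key, hPjk]
  by_cases hij : i = j <;> by_cases hjk : j = k
  · have hik : i = k := hij.trans hjk
    simp only [hij, hjk, hik, and_self, if_true]
    rw [sig1, div_eq_div_iff (by linarith) hD1', hβ_def, hb_def, hc_def]
    simp only [div_pow]
    field_simp [hcn]
    ring
  · have hik : i ≠ k := fun h => hjk (hij ▸ h)
    simp only [hij, hjk, hik, and_false, if_false, if_true, ite_true, ite_false]
    rw [sig2, div_eq_div_iff (by positivity) hD2', hβ_def, hb_def, hc_def]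
    simp only [div_pow]
    field_simp [hcn]
    ring
  · have hik : i ≠ k := fun h => hij (h.trans hjk.symm)
    simp only [hij, hjk, hik, if_true, if_false, ite_true, ite_false, false_and]
    rw [sig3, div_eq_div_iff (by positivity) hD2', hβ_def, hb_def, hc_def]
    simp only [div_pow]
    field_simp [hcn]
    ring
  · by_cases hik : i = k
    · have hkj : ¬(k = j) := fun h => hij (hik.trans h)
      simp only [hij, hjk, hik, hkj, if_true, if_false, ite_true, ite_false, false_and,
        and_false, add_zero]
      rw [sig4, div_eq_div_iff (by linarith) hD4', hβ_def, hb_def, hc_def]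
      simp only [div_pow]
      field_simp [hcn]
      ring
    · simp only [hij, hjk, hik, if_false, ite_false, false_and]
      rw [sig5, div_eq_div_iff (by positivity) hD2', hβ_def, hb_def, hc_def]
      simp only [div_pow]
      field_simp [hcn]
      ring
end

section
/- Let n ≥ 3 be an integer, δ ≥ 1 an integer, and α a real number with 1/n ≤ α < 1. Then σ1 ≥ σ3 ≥ σ2 ≥ σ5 ≥ σ4 ≥ 0. (The ordering of the conditional likelihoods of the symmetric Markov chain used in the proof of Corollary 2.) -/
open Finset

set_option maxHeartbeats 1000000

/-- **Ordering of the likelihoods (proof of Corollary 2).** For `n ≥ 3`, `δ ≥ 1` and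
`1/n ≤ α < 1`: `σ1 ≥ σ3 ≥ σ2 ≥ σ5 ≥ σ4 ≥ 0`. -/
theorem sigma_ordering (n δ : ℕ) (hn : 3 ≤ n) (hδ : 1 ≤ δ)
    (α : ℝ) (hα1 : 1 / (n : ℝ) ≤ α) (hα2 : α < 1) :
    sig1 n α δ ≥ sig3 n α δ ∧ sig3 n α δ ≥ sig2 n α δ ∧ sig2 n α δ ≥ sig5 n α δ ∧
      sig5 n α δ ≥ sig4 n α δ ∧ sig4 n α δ ≥ 0 := by
  obtain ⟨k, rfl⟩ : ∃ k, δ = k + 1 := ⟨δ - 1, (Nat.succ_pred_eq_of_pos hδ).symm⟩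
  have hnpos : (0:ℝ) < n := by positivity
  have hα0 : 0 < α := lt_of_lt_of_le (by positivity) hα1
  rw [div_le_iff₀ hnpos] at hα1
  simp only [ge_iff_le, sig1, sig2, sig3, sig4, sig5, pow_succ]
  set A := (n:ℝ) - 1 with hAdef
  set B := (n:ℝ) * α - 1 with hBdef
  have hn3 : (3:ℝ) ≤ n := by exact_mod_cast hn
  have hA0 : (0:ℝ) < A := by rw [hAdef]; linarith
  have hB0 : (0:ℝ) ≤ B := by rw [hBdef]; nlinarith
  have hBA : B < A := by rw [hAdef, hBdef]; nlinarith
  set P := A ^ k with hPdef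
  set Q := B ^ k with hQdef
  have hP0 : 0 < P := pow_pos hA0 k
  have hQ0 : 0 ≤ Q := pow_nonneg hB0 k
  have hQP : Q ≤ P := pow_le_pow_left₀ hB0 hBA.le k
  have hD1 : 0 < P * A + Q * B * B := by
    nlinarith [mul_pos hP0 hA0, mul_nonneg (mul_nonneg hQ0 hB0) hB0]
  have hD2 : 0 < P * A * A - Q * B * B := by
    nlinarith [mul_nonneg (sub_nonneg.2 hQP) (mul_nonneg hB0 hB0),
      mul_pos hP0 (show 0 < A * A - B * B by nlinarith)]
  have hD4 : 0 < A * (P * A + Q * B * B) := mul_pos hA0 hD1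
  have hN : 0 ≤ (1 - α) * (P * A - Q * B) := by
    have h1 : Q * B ≤ P * A := mul_le_mul hQP hBA.le hB0 hP0.le
    have h2 : (0:ℝ) ≤ 1 - α := by linarith
    nlinarith
  have e1 : A - B = (1 - α) * (n : ℝ) := by rw [hAdef, hBdef]; ring
  have e2 : B + 1 = α * (n : ℝ) := by rw [hBdef]; ring
  clear_value A B P Q
  clear hAdef hBdef hPdef hQdef
  refine ⟨?_, ?_, ?_, ?_, ?_⟩
  · -- σ3 ≤ σ1
    rw [div_le_div_iff₀ hD2 hD1]
    have t1 : 0 ≤ A * P * B * Q * (A - B) := by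
      have := sub_nonneg.2 hBA.le
      positivity
    have key : (P * A * A - A * (Q * B)) * (P * A + Q * B * B) ≤
        (P * A + A * (Q * B)) * (P * A * A - Q * B * B) := by
      nlinarith [t1, mul_nonneg hA0.le t1]
    linarith [mul_le_mul_of_nonneg_left key hα0.le]
  · -- σ2 ≤ σ3
    rw [div_le_div_iff₀ hD2 hD2]
    have t1 : 0 ≤ A * B * (P - Q) := by
      have := sub_nonneg.2 hQP
      positivity
    have key : (A - B) * (P * A + A * (Q * B)) ≤ (B + 1) * (P * A * A - A * (Q * B)) := by
      nlinarith [t1, mul_nonneg hA0.le t1]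
    rw [e1, e2] at key
    have hnum : (1 - α) * (P * A + A * (Q * B)) ≤ α * (P * A * A - A * (Q * B)) := by
      have h := (mul_le_mul_iff_right₀ hnpos).mp
        (show (n:ℝ) * ((1 - α) * (P * A + A * (Q * B))) ≤
          (n:ℝ) * (α * (P * A * A - A * (Q * B))) by linarith [key])
      exact h
    linarith [mul_le_mul_of_nonneg_right hnum hD2.le]
  · -- σ5 ≤ σ2
    rw [div_le_div_iff₀ hD2 hD2]
    have hnum : (1 - α) * (P * A - Q * B) ≤ (1 - α) * (P * A + A * (Q * B)) := by
      have h2 : (0:ℝ) ≤ 1 - α := by linarith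
      nlinarith [mul_nonneg h2 (mul_nonneg (mul_nonneg hQ0 hB0) (by linarith : (0:ℝ) ≤ A + 1))]
    linarith [mul_le_mul_of_nonneg_right hnum hD2.le]
  · -- σ4 ≤ σ5
    rw [div_le_div_iff₀ hD4 hD2]
    nlinarith [mul_nonneg hN (mul_nonneg (mul_nonneg hQ0 (mul_nonneg hB0 hB0))
      (by linarith : (0:ℝ) ≤ A + 1))]
  · exact div_nonneg hN hD4.le
end

section
/- Let n ≥ 3 be an integer, δ ≥ 1 an integer, and α a real number with 1/n ≤ α < 1. Let N = {1,…,n}, U = N × N, and define the conditional pmf p on N given U by p(j | (i,k)) = σ1 if i = j = k; σ2 if i = j ≠ k; σ3 if i ≠ j and j = k; σ4 if i = k ≠ j; σ5 if i, j, k are pairwise distinct. Then each p(·|(i,k)) is a probability distribution on N, and with λ_{x,i}, λ_i, θ_i defined from p as in the context: Σ_{i=1}^{n} i·θ_i = Σ_{j∈N} max_{(i,k)∈U} p(j|(i,k)) = n·α·((n−1)^δ + (n−1)(nα−1)^δ) / ((n−1)^δ + (nα−1)^{δ+1}). (Corollary 2 of the paper: for the symmetric Markov chain with 1/n ≤ α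 the achievable bound R^I and the converse bound R^O coincide and have this closed form, with δ = t − τ.) -/
open Finset

lemma sig_facts (n δ : ℕ) (hn : 3 ≤ n) (hδ : 1 ≤ δ)
    (α : ℝ) (hα1 : 1 / (n : ℝ) ≤ α) (hα2 : α < 1) :
    (0 ≤ sig4 n α δ) ∧ (sig4 n α δ ≤ sig5 n α δ) ∧ (sig5 n α δ ≤ sig2 n α δ) ∧
    (sig5 n α δ ≤ sig3 n α δ) ∧ (sig2 n α δ ≤ sig1 n α δ) ∧ (sig3 n α δ ≤ sig1 n α δ) ∧
    (sig1 n α δ + ((n : ℝ) - 1) * sig4 n α δ = 1) ∧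
    (sig2 n α δ + sig3 n α δ + ((n : ℝ) - 2) * sig5 n α δ = 1) := by
  have hN : (3 : ℝ) ≤ (n : ℝ) := by exact_mod_cast hn
  have hN0 : (0 : ℝ) < (n : ℝ) := by linarith
  have ha0 : (0 : ℝ) < (n : ℝ) - 1 := by linarith
  have hb0 : (0 : ℝ) ≤ (n : ℝ) * α - 1 := by
    have := (div_le_iff₀ hN0).mp hα1
    nlinarith
  have hα0 : (0 : ℝ) < α := by nlinarith
  have hba : (n : ℝ) * α - 1 < (n : ℝ) - 1 := by nlinarith
  have hA : (0 : ℝ) < ((n : ℝ) - 1) ^ δ := pow_pos ha0 δ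
  have hB0 : (0 : ℝ) ≤ ((n : ℝ) * α - 1) ^ δ := pow_nonneg hb0 δ
  have hBA : ((n : ℝ) * α - 1) ^ δ ≤ ((n : ℝ) - 1) ^ δ :=
    pow_le_pow_left₀ hb0 (le_of_lt hba) δ
  have hpowa : ((n : ℝ) - 1) ^ (δ + 1) = ((n : ℝ) - 1) ^ δ * ((n : ℝ) - 1) := pow_succ _ _
  have hpowb : ((n : ℝ) * α - 1) ^ (δ + 1) = ((n : ℝ) * α - 1) ^ δ * ((n : ℝ) * α - 1) :=
    pow_succ _ _
  have hD1 : (0 : ℝ) < ((n : ℝ) - 1) ^ δ + ((n : ℝ) * α - 1) ^ (δ + 1) := by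
    rw [hpowb]; nlinarith
  have hD2 : (0 : ℝ) < ((n : ℝ) - 1) ^ (δ + 1) - ((n : ℝ) * α - 1) ^ (δ + 1) := by
    rw [hpowa, hpowb]; nlinarith
  have hD1a : (0 : ℝ) < ((n : ℝ) - 1) * (((n : ℝ) - 1) ^ δ + ((n : ℝ) * α - 1) ^ (δ + 1)) :=
    mul_pos ha0 hD1
  have e1 : (0 : ℝ) ≤ ((n : ℝ) * α - 1) * (((n : ℝ) - 1) ^ δ - ((n : ℝ) * α - 1) ^ δ) :=
    mul_nonneg hb0 (by linarith)
  have e2 : (0 : ℝ) ≤ ((n : ℝ) - 1) ^ δ + ((n : ℝ) - 1) * ((n : ℝ) * α - 1) ^ δ := by nlinarith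
  have e3 : (0 : ℝ) ≤ (1 - α) * (((n : ℝ) - 1) ^ δ - ((n : ℝ) * α - 1) ^ δ) :=
    mul_nonneg (by linarith) (by linarith)
  have h04 : 0 ≤ sig4 n α δ := by
    unfold sig4
    exact div_nonneg e3 hD1a.le
  have h45 : sig4 n α δ ≤ sig5 n α δ := by
    unfold sig4 sig5
    rw [div_le_div_iff₀ hD1a hD2, hpowa, hpowb]
    linarith [mul_nonneg e3 (mul_nonneg (mul_nonneg hb0 hB0) hN0.le)]
  have h52 : sig5 n α δ ≤ sig2 n α δ := by
    unfold sig5 sig2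
    rw [div_le_div_iff_of_pos_right hD2]
    linarith [mul_nonneg (by linarith : (0:ℝ) ≤ 1 - α) (mul_nonneg hN0.le hB0)]
  have h53 : sig5 n α δ ≤ sig3 n α δ := by
    unfold sig5 sig3
    rw [div_le_div_iff_of_pos_right hD2, hpowa]
    linarith [e1]
  have h21 : sig2 n α δ ≤ sig1 n α δ := by
    unfold sig2 sig1
    rw [div_le_div_iff₀ hD2 hD1, hpowa, hpowb]
    linarith [mul_nonneg e2 e1]
  have h31 : sig3 n α δ ≤ sig1 n α δ := by
    unfold sig3 sig1
    rw [div_le_div_iff₀ hD2 hD1, hpowa, hpowb]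
    linarith [mul_nonneg (mul_nonneg (mul_nonneg hα0.le (mul_nonneg hA.le hB0)) hN0.le)
      (by linarith : (0:ℝ) ≤ (((n : ℝ) - 1) - ((n : ℝ) * α - 1)))]
  have d1 : ((n:ℝ)-1)^δ + ((n:ℝ)*α-1)^δ * ((n:ℝ)*α-1) ≠ 0 := by
    rw [← hpowb]; exact hD1.ne'
  have d2 : ((n:ℝ)-1)^δ * ((n:ℝ)-1) - ((n:ℝ)*α-1)^δ * ((n:ℝ)*α-1) ≠ 0 := by
    rw [← hpowa, ← hpowb]; exact hD2.ne'
  have hsum1 : sig1 n α δ + ((n : ℝ) - 1) * sig4 n α δ = 1 := by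
    unfold sig1 sig4
    rw [hpowb]
    field_simp [d1, ha0.ne']
    rw [div_eq_one_iff_eq]
    · ring
    · intro h; apply d1; linear_combination h
  have hsum2 : sig2 n α δ + sig3 n α δ + ((n : ℝ) - 2) * sig5 n α δ = 1 := by
    unfold sig2 sig3 sig5
    rw [hpowa, hpowb]
    field_simp [d2]
    rw [div_eq_one_iff_eq]
    · ring
    · intro h; apply d2; linear_combination h
  exact ⟨h04, h45, h52, h53, h21, h31, hsum1, hsum2⟩

lemma sum_ite_one {n : ℕ} (i : Fin n) (c d : ℝ) :
    ∑ j : Fin n, (if j = i then c else d) = c + ((n : ℝ) - 1) * d := by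
  have h : ∀ j : Fin n, (if j = i then c else d) = d + (if j = i then c - d else 0) := by
    intro j; split_ifs <;> ring
  simp_rw [h]
  rw [Finset.sum_add_distrib, Finset.sum_const, Finset.sum_ite_eq' Finset.univ i fun _ => c - d]
  have : 0 < n := i.pos
  simp [Finset.card_univ]
  push_cast
  ring

lemma sum_ite_two {n : ℕ} (i k : Fin n) (hik : i ≠ k) (c c' d : ℝ) :
    ∑ j : Fin n, (if j = i then c else if j = k then c' else d)
      = c + c' + ((n : ℝ) - 2) * d := by
  have h : ∀ j : Fin n, (if j = i then c else if j = k then c' else d)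
      = d + (if j = i then c - d else 0) + (if j = k then c' - d else 0) := by
    intro j
    by_cases h1 : j = i
    · subst h1
      rw [if_pos rfl, if_pos rfl, if_neg hik, add_zero]
      ring
    · by_cases h2 : j = k
      · subst h2
        rw [if_neg h1, if_neg h1, if_pos rfl, if_pos rfl]
        ring
      · rw [if_neg h1, if_neg h1, if_neg h2, if_neg h2]
        ring
  simp_rw [h]
  rw [Finset.sum_add_distrib, Finset.sum_add_distrib, Finset.sum_const,
    Finset.sum_ite_eq' Finset.univ i fun _ => c - d,
    Finset.sum_ite_eq' Finset.univ k fun _ => c' - d]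
  have : 0 < n := i.pos
  simp [Finset.card_univ]
  push_cast
  ring

lemma exists_big {m k : ℕ} (S : Finset (Fin m)) (hk : 1 ≤ k) (hS : k ≤ S.card) :
    ∃ i ∈ S, k - 1 ≤ i.val := by
  by_contra h
  push_neg at h
  have hsub : S.image Fin.val ⊆ Finset.range (k - 1) := by
    intro v hv
    obtain ⟨i, hi, rfl⟩ := Finset.mem_image.mp hv
    exact Finset.mem_range.mpr (h i hi)
  have hc := Finset.card_le_card hsub
  rw [Finset.card_image_of_injective _ Fin.val_injective, Finset.card_range] at hc
  omega


/-- **Corollary 2.** For the symmetric Markov chain with `1/n ≤ α < 1` (and `n ≥ 3`),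
the conditional pmf `p(j | (i,k))` given by the `σ`-values is a probability distribution,
and the achievable bound `Σ_{i=1}^n i·θ_i` and the converse bound `Σ_j max_u p(j|u)`
coincide and equal `n·α·((n−1)^δ + (n−1)(nα−1)^δ)/((n−1)^δ + (nα−1)^{δ+1})`. -/
theorem corollary_two (n δ : ℕ) (hn : 3 ≤ n) (hδ : 1 ≤ δ)
    (α : ℝ) (hα1 : 1 / (n : ℝ) ≤ α) (hα2 : α < 1)
    (p : Fin n × Fin n → Fin n → ℝ)
    (hp : ∀ i k j : Fin n, p (i, k) j =
      if i = j ∧ j = k then sig1 n α δ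
      else if i = j then sig2 n α δ
      else if j = k then sig3 n α δ
      else if i = k then sig4 n α δ
      else sig5 n α δ)
    (e : Fin n → Fin (n ^ 2) ≃ Fin n × Fin n)
    (hmono : ∀ x, Monotone fun i => p (e x i) x)
    (lamx : Fin n → ℕ → ℝ)
    (hlamx0 : ∀ x, lamx x 0 = 0)
    (hlamx : ∀ (x : Fin n) (i : Fin (n ^ 2)), lamx x (i.val + 1) = p (e x i) x)
    (lam : ℕ → ℝ)
    (hlam : ∀ i, lam i = ∑ x, lamx x i)
    (θ : ℕ → ℝ)
    (hθ : ∀ i, 1 ≤ i → i ≤ n - 1 → θ i = lam i - lam (i - 1))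
    (hθn : θ n = 1 - lam (n - 1)) :
    (∀ u x, 0 ≤ p u x) ∧
    (∀ u, ∑ x, p u x = 1) ∧
    (∑ i ∈ Icc 1 n, (i : ℝ) * θ i =
      ∑ j : Fin n,
        Finset.univ.sup' ⟨((⟨0, by omega⟩ : Fin n), (⟨0, by omega⟩ : Fin n)), mem_univ _⟩
          (fun u => p u j)) ∧
    (∑ j : Fin n,
        Finset.univ.sup' ⟨((⟨0, by omega⟩ : Fin n), (⟨0, by omega⟩ : Fin n)), mem_univ _⟩
          (fun u => p u j) =
      (n : ℝ) * α * (((n : ℝ) - 1) ^ δ + ((n : ℝ) - 1) * ((n : ℝ) * α - 1) ^ δ) /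
        (((n : ℝ) - 1) ^ δ + ((n : ℝ) * α - 1) ^ (δ + 1))) := by
  obtain ⟨h04, h45, h52, h53, h21, h31, hsum1, hsum2⟩ := sig_facts n δ hn hδ α hα1 hα2
  have h51 : sig5 n α δ ≤ sig1 n α δ := h53.trans h31
  have h41 : sig4 n α δ ≤ sig1 n α δ := h45.trans h51
  have h42 : sig4 n α δ ≤ sig2 n α δ := h45.trans h52
  have h43 : sig4 n α δ ≤ sig3 n α δ := h45.trans h53
  have hlb : ∀ u x, sig4 n α δ ≤ p u x := by
    rintro ⟨i, k⟩ x
    rw [hp]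
    split_ifs
    exacts [h41, h42, h43, le_refl _, h45]
  have hub : ∀ u x, p u x ≤ sig1 n α δ := by
    rintro ⟨i, k⟩ x
    rw [hp]
    split_ifs
    exacts [le_refl _, h21, h31, h41, h51]
  have part1 : ∀ u x, 0 ≤ p u x := fun u x => h04.trans (hlb u x)
  have part2 : ∀ u, ∑ x, p u x = 1 := by
    rintro ⟨i, k⟩
    by_cases hik : i = k
    · subst hik
      have hrw : ∀ x : Fin n, p (i, i) x = if x = i then sig1 n α δ else sig4 n α δ := by
        intro x
        rw [hp]
        by_cases hx : x = i
        · subst hx; simp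
        · simp [hx, Ne.symm hx]
      simp only [hrw]
      rw [sum_ite_one i]
      linarith [hsum1]
    · have hrw : ∀ x : Fin n, p (i, k) x =
          if x = i then sig2 n α δ else if x = k then sig3 n α δ else sig5 n α δ := by
        intro x
        rw [hp]
        by_cases h1 : x = i
        · subst h1; simp [hik]
        · by_cases h2 : x = k
          · subst h2; simp [h1, Ne.symm h1]
          · simp [h1, h2, Ne.symm h1, hik]
      simp only [hrw]
      rw [sum_ite_two i k hik]
      linarith [hsum2]
  have hmax : ∀ j : Fin n,
      Finset.univ.sup' ⟨((⟨0, by omega⟩ : Fin n), (⟨0, by omega⟩ : Fin n)), mem_univ _⟩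
        (fun u => p u j) = sig1 n α δ := by
    intro j
    apply le_antisymm
    · exact Finset.sup'_le _ _ fun u _ => hub u j
    · have hjj : p (j, j) j = sig1 n α δ := by rw [hp]; simp
      exact hjj ▸ Finset.le_sup' (fun u => p u j) (mem_univ (j, j))
  have hsupsum : ∑ j : Fin n,
      Finset.univ.sup' ⟨((⟨0, by omega⟩ : Fin n), (⟨0, by omega⟩ : Fin n)), mem_univ _⟩
        (fun u => p u j) = (n : ℝ) * sig1 n α δ := by
    rw [Finset.sum_congr rfl fun j _ => hmax j, Finset.sum_const, Finset.card_univ,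
      Fintype.card_fin, nsmul_eq_mul]
  have part4 : ∑ j : Fin n,
      Finset.univ.sup' ⟨((⟨0, by omega⟩ : Fin n), (⟨0, by omega⟩ : Fin n)), mem_univ _⟩
        (fun u => p u j) =
      (n : ℝ) * α * (((n : ℝ) - 1) ^ δ + ((n : ℝ) - 1) * ((n : ℝ) * α - 1) ^ δ) /
        (((n : ℝ) - 1) ^ δ + ((n : ℝ) * α - 1) ^ (δ + 1)) := by
    rw [hsupsum]
    unfold sig1
    ring
  have hlam0 : lam 0 = 0 := by
    rw [hlam]
    exact Finset.sum_eq_zero fun x _ => hlamx0 x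
  have hn2 : n ≤ n ^ 2 := Nat.le_self_pow (by norm_num) n
  have hlamk : ∀ k, 1 ≤ k → k ≤ n - 1 → lam k = (n : ℝ) * sig4 n α δ := by
    intro k hk1 hk2
    have hx : ∀ x : Fin n, lamx x k = sig4 n α δ := by
      intro x
      have hklt : k - 1 < n ^ 2 := by omega
      have hval : lamx x k = p (e x ⟨k - 1, hklt⟩) x := by
        have h1 := hlamx x ⟨k - 1, hklt⟩
        rwa [Nat.sub_add_cancel hk1] at h1
      rw [hval]
      refine le_antisymm ?_ (hlb _ _)
      set T : Finset (Fin (n ^ 2)) :=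
        (Finset.univ.erase x).image (fun m => (e x).symm (m, m)) with hT
      have hTcard : n - 1 ≤ T.card := by
        rw [hT, Finset.card_image_of_injective, Finset.card_erase_of_mem (mem_univ x),
          Finset.card_univ, Fintype.card_fin]
        intro a b hab
        have h2 := (e x).symm.injective hab
        exact (Prod.mk.injEq _ _ _ _).mp h2 |>.1
      obtain ⟨i1, hi1T, hi1⟩ := exists_big T (by omega) hTcard
      have hfi1 : p (e x i1) x = sig4 n α δ := by
        obtain ⟨m, hm, rfl⟩ := Finset.mem_image.mp hi1T
        have hmx : m ≠ x := Finset.ne_of_mem_erase hm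
        rw [Equiv.apply_symm_apply, hp]
        simp [hmx, Ne.symm hmx]
      calc p (e x ⟨k - 1, hklt⟩) x ≤ p (e x i1) x := by
            apply hmono x
            rw [Fin.le_def]
            simp only []
            omega
        _ = sig4 n α δ := hfi1
    rw [hlam, Finset.sum_congr rfl fun x _ => hx x, Finset.sum_const, Finset.card_univ,
      Fintype.card_fin, nsmul_eq_mul]
  have hθ1 : θ 1 = (n : ℝ) * sig4 n α δ := by
    rw [hθ 1 le_rfl (by omega), hlamk 1 le_rfl (by omega)]
    simp [hlam0]
  have hθn' : θ n = 1 - (n : ℝ) * sig4 n α δ := by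
    rw [hθn, hlamk (n - 1) (by omega) le_rfl]
  have hθmid : ∀ i, 2 ≤ i → i ≤ n - 1 → θ i = 0 := by
    intro i h2 h3
    rw [hθ i (by omega) h3, hlamk i (by omega) h3, hlamk (i - 1) (by omega) (by omega)]
    ring
  have part3 : ∑ i ∈ Icc 1 n, (i : ℝ) * θ i =
      ∑ j : Fin n,
        Finset.univ.sup' ⟨((⟨0, by omega⟩ : Fin n), (⟨0, by omega⟩ : Fin n)), mem_univ _⟩
          (fun u => p u j) := by
    have hIcc : Icc 1 n = insert 1 (insert n (Icc 2 (n - 1))) := by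
      ext m
      simp only [Finset.mem_Icc, Finset.mem_insert]
      omega
    rw [hsupsum, hIcc, Finset.sum_insert (by simp only [Finset.mem_insert, Finset.mem_Icc]; omega),
      Finset.sum_insert (by simp only [Finset.mem_Icc]; omega),
      Finset.sum_eq_zero (fun i hi => by
        rw [hθmid i (Finset.mem_Icc.mp hi).1 (Finset.mem_Icc.mp hi).2]
        ring)]
    rw [hθ1, hθn']
    push_cast
    linear_combination (-(n : ℝ)) * hsum1
  exact ⟨part1, part2, part3, part4⟩
end

section
/- Let n ≥ 3 be an integer, α a real number with 0 ≤ α < 1/n, and δ ≥ 2 an even integer. Then σ2 ≥ σ4 ≥ σ5 ≥ σ1 ≥ σ3, and n·σ2 ≤ n·σ3 + n − n²·σ3. (The even-δ case of the remark following Corollary 2: for 0 ≤ α < 1/n the converse bound 1/R^O = nσ2 is strictly below the achievable bound 1/R^I = nσ3 + n − n²σ3.) -/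
open Finset

set_option maxHeartbeats 2000000 in
/-- **Even-`δ` case of the remark following Corollary 2.** For `n ≥ 3`, `0 ≤ α < 1/n`
and even `δ ≥ 2`: `σ2 ≥ σ4 ≥ σ5 ≥ σ1 ≥ σ3` and `n·σ2 ≤ n·σ3 + n − n²·σ3`. -/theorem remark_even_delta (n δ : ℕ) (hn : 3 ≤ n) (hδ : 2 ≤ δ) (hδeven : Even δ)
    (α : ℝ) (hα0 : 0 ≤ α) (hα1 : α < 1 / (n : ℝ)) :
    (sig2 n α δ ≥ sig4 n α δ ∧ sig4 n α δ ≥ sig5 n α δ ∧ sig5 n α δ ≥ sig1 n α δ ∧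
      sig1 n α δ ≥ sig3 n α δ) ∧
    (n : ℝ) * sig2 n α δ ≤ (n : ℝ) * sig3 n α δ + (n : ℝ) - (n : ℝ) ^ 2 * sig3 n α δ := by
  have hn3 : (3:ℝ) ≤ (n:ℝ) := by exact_mod_cast hn
  have hnpos : (0:ℝ) < (n:ℝ) := by linarith
  have hta : (n:ℝ) * α < 1 := by
    have h := (lt_div_iff₀ hnpos).mp hα1
    linarith [h]
  have htb : 0 ≤ (n:ℝ) * α := mul_nonneg hnpos.le hα0
  simp only [sig1, sig2, sig3, sig4, sig5, pow_succ]
  set b : ℝ := (n:ℝ) - 1 with hbdef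
  set t : ℝ := (n:ℝ) * α - 1 with htdef
  set A : ℝ := b ^ δ with hAdef
  set B : ℝ := t ^ δ with hBdef
  have hb : 2 ≤ b := by rw [hbdef]; linarith
  have ht0 : t < 0 := by rw [htdef]; linarith
  have ht1 : -1 ≤ t := by rw [htdef]; linarith
  have hα1' : α < 1 := by
    linarith [mul_nonneg (show (0:ℝ) ≤ (n:ℝ) - 1 by linarith) hα0, hta]
  have h1α : 0 ≤ 1 - α := by linarith
  have hbp : (0:ℝ) < b + 1 := by linarith
  have hm : (b + 1) * α = t + 1 := by rw [hbdef, htdef]; ring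
  have htne : t ≠ 0 := ne_of_lt ht0
  have hB0 : 0 < B := by rw [hBdef]; exact hδeven.pow_pos htne
  have habs : |t| ≤ 1 := abs_le.mpr ⟨ht1, by linarith⟩
  have hB1 : B ≤ 1 := by
    rw [hBdef, ← hδeven.pow_abs]
    exact pow_le_one₀ (abs_nonneg t) habs
  have hBt2 : B ≤ t ^ 2 := by
    rw [hBdef, ← hδeven.pow_abs, ← sq_abs]
    exact pow_le_pow_of_le_one (abs_nonneg t) habs hδ
  have hA : b ^ 2 ≤ A := by rw [hAdef]; exact pow_le_pow_right₀ (by linarith) hδ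
  have hA4 : (4:ℝ) ≤ A := by nlinarith [hb, hA]
  have hA0 : (0:ℝ) < A := by linarith
  have hbA : b ≤ A := by nlinarith [hb, hA]
  have hABs : B < A := by linarith
  have hBtlb : -1 ≤ B * t := by
    have h := mul_nonneg hB0.le (show (0:ℝ) ≤ 1 + t by linarith)
    nlinarith [h]
  have hBtub : B * t < 0 := mul_neg_of_pos_of_neg hB0 ht0
  have hd1 : 0 < A + B * t := by linarith
  have hd2 : 0 < A * b - B * t := by
    linarith [mul_pos hA0 (show (0:ℝ) < b by linarith), hBtub]
  have hd4 : 0 < b * (A + B * t) := mul_pos (by linarith) hd1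
  have htt : t ^ 2 ≤ -t := by
    nlinarith [mul_nonneg (neg_nonneg.mpr ht0.le) (show (0:ℝ) ≤ t + 1 by linarith)]
  refine ⟨⟨?_, ?_, ?_, ?_⟩, ?_⟩
  · -- sig2 ≥ sig4
    rw [ge_iff_le, div_le_div_iff₀ hd4 hd2]
    have h1 : 0 ≤ A * (t + 1) := mul_nonneg hA0.le (by linarith)
    have h2 : 0 ≤ (t * B + 1) * (b - 1) :=
      mul_nonneg (by nlinarith [hBtlb]) (by linarith)
    have h3 : 0 ≤ (A - 1) * (b - 1) := mul_nonneg (by linarith) (by linarith)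
    have hinner1 : 0 ≤ A * (b + t) + t * B * (b - 1) := by nlinarith [h1, h2, h3]
    have hIn1 : 0 ≤ (1 - α) * ((b + 1) * B * (A * (b + t) + t * B * (b - 1))) :=
      mul_nonneg h1α (mul_nonneg (mul_nonneg hbp.le hB0.le) hinner1)
    nlinarith [hIn1]
  · -- sig4 ≥ sig5
    rw [ge_iff_le, div_le_div_iff₀ hd2 hd4]
    have k2 : 0 ≤ (1 - α) * (A - B) * (-(B * t)) * (1 + b) :=
      mul_nonneg (mul_nonneg (mul_nonneg h1α (by linarith)) (by linarith)) (by linarith)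
    nlinarith [k2]
  · -- sig5 ≥ sig1
    rw [ge_iff_le, div_le_div_iff₀ hd1 hd2, ← mul_le_mul_iff_right₀ hbp]
    have eA : (b + 1) * (α * ((A + b * B) * (A * b - B * t))) =
        (t + 1) * ((A + b * B) * (A * b - B * t)) := by
      rw [show (b + 1) * (α * ((A + b * B) * (A * b - B * t))) =
        ((b + 1) * α) * ((A + b * B) * (A * b - B * t)) by ring, hm]
    have eB : (b + 1) * (α * ((A - B) * (A + B * t))) =
        (t + 1) * ((A - B) * (A + B * t)) := by
      rw [show (b + 1) * (α * ((A - B) * (A + B * t))) =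
        ((b + 1) * α) * ((A - B) * (A + B * t)) by ring, hm]
    have d1' : b * A * B ≤ b * A * t ^ 2 :=
      mul_le_mul_of_nonneg_left hBt2 (by positivity)
    have d2' : b * A * t ^ 2 ≤ b * A * (-t) :=
      mul_le_mul_of_nonneg_left htt (by positivity)
    have d3' : b * (A * (-t)) ≤ A * (A * (-t)) :=
      mul_le_mul_of_nonneg_right hbA
        (mul_nonneg hA0.le (by linarith))
    have c4 : 0 ≤ (b - 2) * ((-t) * (B * A)) :=
      mul_nonneg (by linarith)
        (mul_nonneg (by linarith) (mul_nonneg hB0.le hA0.le))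
    have hIn3 : (b - 2) * t * B * A + b * B * A + t * A ^ 2 - t ^ 2 * B ^ 2 ≤ 0 := by
      nlinarith [d1', d2', d3', c4, sq_nonneg (t * B)]
    have hIn3' : 0 ≤ (b + 1) *
        (-((b - 2) * t * B * A + b * B * A + t * A ^ 2 - t ^ 2 * B ^ 2)) :=
      mul_nonneg hbp.le (by linarith)
    nlinarith [eA, eB, hIn3']
  · -- sig1 ≥ sig3
    rw [ge_iff_le, div_le_div_iff₀ hd2 hd1]
    have k4 : 0 ≤ α * (A * B * ((b + 1) * (b - t))) :=
      mul_nonneg hα0 (mul_nonneg (mul_nonneg hA0.le hB0.le)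
        (mul_nonneg hbp.le (by linarith)))
    nlinarith [k4]
  · -- final bound
    rw [show ((n:ℝ)) = b + 1 by rw [hbdef]; ring]
    have e3 : (b + 1) * ((1 - α) * (A + b * B)) =
        (b + 1) * (A + b * B) - (t + 1) * (A + b * B) := by
      rw [show (b + 1) * ((1 - α) * (A + b * B)) =
        (b + 1) * (A + b * B) - ((b + 1) * α) * (A + b * B) by ring, hm]
    have e4 : (b + 1) * (b * (α * (A * b - b * B))) =
        b * ((t + 1) * (A * b - b * B)) := by
      rw [show (b + 1) * (b * (α * (A * b - b * B))) =
        b * (((b + 1) * α) * (A * b - b * B)) by ring, hm]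
    have hIn5 : t * (b ^ 2 - 1) * (A - B) ≤ 0 := by
      nlinarith [mul_nonneg (mul_nonneg (neg_nonneg.mpr ht0.le)
        (show (0:ℝ) ≤ b ^ 2 - 1 by nlinarith [hb])) (show (0:ℝ) ≤ A - B by linarith)]
    have h52 : (1 - α) * (A + b * B) / (A * b - B * t) +
        b * (α * (A * b - b * B) / (A * b - B * t)) ≤ 1 := by
      rw [← mul_div_assoc, ← add_div, div_le_one hd2, ← mul_le_mul_iff_right₀ hbp]
      nlinarith [e3, e4, hIn5]
    nlinarith [mul_le_mul_of_nonneg_left h52 hbp.le]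
end

section
/- Let n ≥ 3 be an integer, α a real number with 0 ≤ α < 1/n, and δ ≥ 1 an odd integer. Then σ5 ≥ σ4 ≥ σ2 ≥ σ3 ≥ σ1, and n·σ5 ≤ σ3·(2n − n²) − n·σ1 + n. (The odd-δ case of the remark following Corollary 2: for 0 ≤ α < 1/n the converse bound 1/R^O = nσ5 is below the achievable bound 1/R^I = σ3(2n − n²) − nσ1 + n.) -/
open Finset

/-!
Write `N = n - 1`, `t = nα - 1 ∈ [-1, 0)` and `b = (t / N)^δ`. Dividing numerators and
denominators by `N^δ` turns every `σᵢ` into `n⁻¹` times a rational function of `N, t, b`.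
Since `δ` is odd, `u = t / N ∈ [-1, 0]` satisfies `u ≤ u^δ ≤ 0`, i.e. `t ≤ N b ≤ 0`, and this is
all that is needed: under these constraints each claimed inequality, once its (positive)
denominators are cleared, is a product of factors of known sign.
-/

lemma Odd.le_pow_of_neg_one_le {u : ℝ} {δ : ℕ} (hδ : Odd δ) (hu : -1 ≤ u) (hu0 : u ≤ 0) :
    u ≤ u ^ δ := by
  have h : (-u) ^ δ ≤ -u := pow_le_of_le_one (by linarith) (by linarith) hδ.pos.ne'
  rw [hδ.neg_pow] at h
  linarith

lemma le_mul_div_pow_of_odd {N t : ℝ} {δ : ℕ} (hδ : Odd δ) (hN : 0 < N) (ht : -N ≤ t)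
    (ht0 : t ≤ 0) : t ≤ N * (t / N) ^ δ := by
  rw [← div_le_iff₀' hN]
  refine hδ.le_pow_of_neg_one_le ?_ (div_nonpos_of_nonpos_of_nonneg ht0 hN.le)
  rwa [le_div_iff₀ hN, neg_one_mul]

/- `σᵢ = rsigᵢ (n - 1) (nα - 1) b / n` whenever `(n - 1)^δ b = (nα - 1)^δ`. -/

noncomputable def rsig1 (N t b : ℝ) : ℝ := (t + 1) * (1 + N * b) / (1 + t * b)

noncomputable def rsig2 (N t b : ℝ) : ℝ := (N - t) * (1 + N * b) / (N - t * b)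

noncomputable def rsig3 (N t b : ℝ) : ℝ := (t + 1) * (N - N * b) / (N - t * b)

noncomputable def rsig4 (N t b : ℝ) : ℝ := (N - t) * (1 - b) / (N * (1 + t * b))

noncomputable def rsig5 (N t b : ℝ) : ℝ := (N - t) * (1 - b) / (N - t * b)

section Reduced

variable {N t b : ℝ}

lemma sub_mul_pos_of_le_mul (hN : 1 < N) (ht : -1 ≤ t) (htb : t ≤ N * b) (hb : b ≤ 0) :
    0 < N - t * b := by
  -- `N (t b) = t (N b) ≤ t² ≤ 1 < N²`
  nlinarith

lemma rsig4_le_rsig5 (hN : 1 < N) (ht : -1 ≤ t) (htb : t ≤ N * b) (hb : b ≤ 0) :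
    rsig4 N t b ≤ rsig5 N t b := by
  have ht0 : t ≤ 0 := by nlinarith
  have htb0 : 0 ≤ t * b := mul_nonneg_of_nonpos_of_nonpos ht0 hb
  have hD : 0 < N - t * b := sub_mul_pos_of_le_mul hN ht htb hb
  exact div_le_div_of_nonneg_left (mul_nonneg (by linarith) (by linarith)) hD (by nlinarith)

lemma rsig2_le_rsig4 (hN : 1 < N) (ht : -1 ≤ t) (htb : t ≤ N * b) (hb : b ≤ 0) :
    rsig2 N t b ≤ rsig4 N t b := by
  have ht0 : t ≤ 0 := by nlinarith
  have htb0 : 0 ≤ t * b := mul_nonneg_of_nonpos_of_nonpos ht0 hb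
  have hD : 0 < N - t * b := sub_mul_pos_of_le_mul hN ht htb hb
  rw [rsig2, rsig4, div_le_div_iff₀ hD (by positivity)]
  have key : (N - t) * (1 - b) * (N - t * b) - (N - t) * (1 + N * b) * (N * (1 + t * b)) =
      (N - t) * (N + 1) * (-b) * (N + t + (N - 1) * (t * b)) := by ring
  have : 0 ≤ (N - t) * (N + 1) * (-b) * (N + t + (N - 1) * (t * b)) := by
    have hNtb : 0 ≤ (N - 1) * (t * b) := mul_nonneg (by linarith) htb0
    exact mul_nonneg (mul_nonneg (mul_nonneg (by linarith) (by linarith)) (by linarith))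
      (by linarith)
  linarith

lemma rsig3_le_rsig2 (hN : 1 < N) (ht : -1 ≤ t) (htb : t ≤ N * b) (hb : b ≤ 0) :
    rsig3 N t b ≤ rsig2 N t b := by
  refine div_le_div_of_nonneg_right ?_ (sub_mul_pos_of_le_mul hN ht htb hb).le
  have key : (N - t) * (1 + N * b) - (t + 1) * (N - N * b) = (N + 1) * (N * b - t) := by ring
  nlinarith

lemma rsig1_le_rsig3 (hN : 1 < N) (ht : -1 ≤ t) (htb : t ≤ N * b) (hb : b ≤ 0) :
    rsig1 N t b ≤ rsig3 N t b := by
  have ht0 : t ≤ 0 := by nlinarith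
  have htb0 : 0 ≤ t * b := mul_nonneg_of_nonpos_of_nonpos ht0 hb
  have hD : 0 < N - t * b := sub_mul_pos_of_le_mul hN ht htb hb
  rw [rsig1, rsig3, div_le_div_iff₀ (by positivity) hD]
  have key : (t + 1) * (N - N * b) * (1 + t * b) - (t + 1) * (1 + N * b) * (N - t * b) =
      (t + 1) * (N + 1) * (-b) * (N - t) := by ring
  have : 0 ≤ (t + 1) * (N + 1) * (-b) * (N - t) :=
    mul_nonneg (mul_nonneg (mul_nonneg (by linarith) (by linarith)) (by linarith)) (by linarith)
  linarith

lemma rsig5_add_rsig1_add_mul_rsig3_le (hN : 2 ≤ N) (ht : -1 ≤ t) (htb : t ≤ N * b)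
    (hb : b ≤ 0) : rsig5 N t b + rsig1 N t b + (N - 1) * rsig3 N t b ≤ N + 1 := by
  have ht0 : t ≤ 0 := by nlinarith
  have htb0 : 0 ≤ t * b := mul_nonneg_of_nonpos_of_nonpos ht0 hb
  have hD : 0 < N - t * b := sub_mul_pos_of_le_mul (by linarith) ht htb hb
  have hK : 0 ≤ N ^ 2 - 1 + b * ((N + 1) * (N + t * (N - 2))) := by
    have h2 : 0 ≤ (t + 1) * (N - 2) := mul_nonneg (by linarith) (by linarith)
    have hK0 : 0 ≤ (N + 1) * (N + t * (N - 2)) := mul_nonneg (by linarith) (by linarith)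
    have hbK := mul_le_mul_of_nonneg_right htb hK0
    -- `N` times the claim is at least `N (N² - 1) + t (N + 1) (N + t (N - 2))`, which is this:
    have h : 0 ≤ (N + 1) * (N * (N - 1 + t) + t ^ 2 * (N - 2)) :=
      mul_nonneg (by linarith) (add_nonneg (mul_nonneg (by linarith) (by linarith))
        (by positivity))
    exact nonneg_of_mul_nonneg_right (by linarith) (by linarith : (0 : ℝ) < N)
  have key : N + 1 - (rsig5 N t b + rsig1 N t b + (N - 1) * rsig3 N t b) =
      (-t) * (1 - b) * (N ^ 2 - 1 + b * ((N + 1) * (N + t * (N - 2)))) /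
        ((N - t * b) * (1 + t * b)) := by
    rw [rsig1, rsig3, rsig5]
    field_simp
    ring
  have : 0 ≤ (-t) * (1 - b) * (N ^ 2 - 1 + b * ((N + 1) * (N + t * (N - 2)))) /
      ((N - t * b) * (1 + t * b)) :=
    div_nonneg (mul_nonneg (mul_nonneg (by linarith) (by linarith)) hK) (by positivity)
  linarith

end Reduced

section Normalization

variable {n δ : ℕ} {α b : ℝ}

lemma sig1_eq (hn : (n : ℝ) ≠ 0) (hN : (n : ℝ) - 1 ≠ 0)
    (hb : ((n : ℝ) - 1) ^ δ * b = ((n : ℝ) * α - 1) ^ δ) :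
    sig1 n α δ = rsig1 ((n : ℝ) - 1) ((n : ℝ) * α - 1) b / n := by
  rw [rsig1, div_div, ← mul_div_mul_left _ _ (div_ne_zero (pow_ne_zero δ hN) hn), sig1,
    pow_succ, ← hb]
  congr 1 <;> grind

lemma sig2_eq (hn : (n : ℝ) ≠ 0) (hN : (n : ℝ) - 1 ≠ 0)
    (hb : ((n : ℝ) - 1) ^ δ * b = ((n : ℝ) * α - 1) ^ δ) :
    sig2 n α δ = rsig2 ((n : ℝ) - 1) ((n : ℝ) * α - 1) b / n := by
  rw [rsig2, div_div, ← mul_div_mul_left _ _ (div_ne_zero (pow_ne_zero δ hN) hn), sig2,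
    pow_succ, pow_succ, ← hb]
  congr 1 <;> grind

lemma sig3_eq (hn : (n : ℝ) ≠ 0) (hN : (n : ℝ) - 1 ≠ 0)
    (hb : ((n : ℝ) - 1) ^ δ * b = ((n : ℝ) * α - 1) ^ δ) :
    sig3 n α δ = rsig3 ((n : ℝ) - 1) ((n : ℝ) * α - 1) b / n := by
  rw [rsig3, div_div, ← mul_div_mul_left _ _ (div_ne_zero (pow_ne_zero δ hN) hn), sig3,
    pow_succ, pow_succ, ← hb]
  congr 1 <;> grind

lemma sig4_eq (hn : (n : ℝ) ≠ 0) (hN : (n : ℝ) - 1 ≠ 0)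
    (hb : ((n : ℝ) - 1) ^ δ * b = ((n : ℝ) * α - 1) ^ δ) :
    sig4 n α δ = rsig4 ((n : ℝ) - 1) ((n : ℝ) * α - 1) b / n := by
  rw [rsig4, div_div, ← mul_div_mul_left _ _ (div_ne_zero (pow_ne_zero δ hN) hn), sig4,
    pow_succ, ← hb]
  congr 1 <;> grind

lemma sig5_eq (hn : (n : ℝ) ≠ 0) (hN : (n : ℝ) - 1 ≠ 0)
    (hb : ((n : ℝ) - 1) ^ δ * b = ((n : ℝ) * α - 1) ^ δ) :
    sig5 n α δ = rsig5 ((n : ℝ) - 1) ((n : ℝ) * α - 1) b / n := by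
  rw [rsig5, div_div, ← mul_div_mul_left _ _ (div_ne_zero (pow_ne_zero δ hN) hn), sig5,
    pow_succ, pow_succ, ← hb]
  congr 1 <;> grind

end Normalization

theorem remark_odd_delta_general (n δ : ℕ) (hn : 3 ≤ n) (hδodd : Odd δ)
    (α : ℝ) (hα0 : 0 ≤ α) (hα1 : α < 1 / (n : ℝ)) :
    (sig5 n α δ ≥ sig4 n α δ ∧ sig4 n α δ ≥ sig2 n α δ ∧ sig2 n α δ ≥ sig3 n α δ ∧
      sig3 n α δ ≥ sig1 n α δ) ∧
    (n : ℝ) * sig5 n α δ ≤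
      sig3 n α δ * (2 * (n : ℝ) - (n : ℝ) ^ 2) - (n : ℝ) * sig1 n α δ + (n : ℝ) := by
  have hn' : (3 : ℝ) ≤ n := by exact_mod_cast hn
  set N : ℝ := (n : ℝ) - 1
  set t : ℝ := (n : ℝ) * α - 1
  set b : ℝ := (t / N) ^ δ
  have hN : 2 ≤ N := by linarith
  have ht : -1 ≤ t := by nlinarith
  have ht0 : t ≤ 0 := by linarith [(lt_div_iff₀ (by linarith : (0 : ℝ) < n)).mp hα1]
  have hb : N ^ δ * b = t ^ δ := by rw [← mul_pow, mul_div_cancel₀ _ (by linarith)]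
  have htb : t ≤ N * b := le_mul_div_pow_of_odd hδodd (by linarith) (by linarith) ht0
  have hb0 : b ≤ 0 :=
    hδodd.pow_nonpos_iff.mpr (div_nonpos_of_nonpos_of_nonneg ht0 (by linarith))
  have hn0 : (n : ℝ) ≠ 0 := by positivity
  have hN0 : N ≠ 0 := by linarith
  have hN1 : 1 < N := by linarith
  rw [sig1_eq hn0 hN0 hb, sig2_eq hn0 hN0 hb, sig3_eq hn0 hN0 hb, sig4_eq hn0 hN0 hb,
    sig5_eq hn0 hN0 hb]
  refine ⟨⟨?_, ?_, ?_, ?_⟩, ?_⟩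
  · exact div_le_div_of_nonneg_right (rsig4_le_rsig5 hN1 ht htb hb0) n.cast_nonneg
  · exact div_le_div_of_nonneg_right (rsig2_le_rsig4 hN1 ht htb hb0) n.cast_nonneg
  · exact div_le_div_of_nonneg_right (rsig3_le_rsig2 hN1 ht htb hb0) n.cast_nonneg
  · exact div_le_div_of_nonneg_right (rsig1_le_rsig3 hN1 ht htb hb0) n.cast_nonneg
  · have h3 : rsig3 N t b / n * (2 * n - n ^ 2) = -((N - 1) * rsig3 N t b) := by
      field_simp
      ring
    rw [mul_div_cancel₀ _ hn0, mul_div_cancel₀ _ hn0, h3]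
    linarith [rsig5_add_rsig1_add_mul_rsig3_le hN ht htb hb0]

/-- **Odd-`δ` case of the remark following Corollary 2.** For `n ≥ 3`, `0 ≤ α < 1/n`
and odd `δ ≥ 1`: `σ5 ≥ σ4 ≥ σ2 ≥ σ3 ≥ σ1` and `n·σ5 ≤ σ3·(2n − n²) − n·σ1 + n`. -/
theorem remark_odd_delta (n δ : ℕ) (hn : 3 ≤ n) (hδ : 1 ≤ δ) (hδodd : Odd δ)
    (α : ℝ) (hα0 : 0 ≤ α) (hα1 : α < 1 / (n : ℝ)) :
    (sig5 n α δ ≥ sig4 n α δ ∧ sig4 n α δ ≥ sig2 n α δ ∧ sig2 n α δ ≥ sig3 n α δ ∧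
      sig3 n α δ ≥ sig1 n α δ) ∧
    (n : ℝ) * sig5 n α δ ≤
      sig3 n α δ * (2 * (n : ℝ) - (n : ℝ) ^ 2) - (n : ℝ) * sig1 n α δ + (n : ℝ) :=
  remark_odd_delta_general n δ hn hδodd α hα0 hα1
end
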